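/- arXiv:2211.03570 — 9 statements merged into one kernel-verified Lean document; each statement's English description precedes it below -/
import Mathlib

section
/- (Theorem 1, upper bound) For every n ∈ ℕ and every ε with 0 ≤ ε ≤ 1 − E_min, the expected parameter volume of "bad" global minima satisfies ⟨ω_ε(S)⟩_S ≤ Ω_ε · (1 − (E_min + ε))^n. -/
open MeasureTheory

/-- Theorem 1 (upper bound): the expected parameter volume of "bad" global minima
is at most `Ω_ε · (1 - (E_min + ε))^n`. -/
theorem mean_bad_volume_le
    {W Z : Type*} [MeasurableSpace W] [MeasurableSpace Z]
    (μ : Measure W) [IsFiniteMeasure μ] (hΩ : 0 < μ Set.univ)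
    (P : Measure Z) [IsProbabilityMeasure P]
    (L : W → Z → ℝ) (hLmeas : Measurable (Function.uncurry L))
    (hL01 : ∀ w z, L w z = 0 ∨ L w z = 1)
    (E : W → ℝ) (hE : ∀ w, E w = ∫ z, L w z ∂P)
    (Emin : ℝ) (hEmin0 : 0 ≤ Emin) (hEmin1 : Emin ≤ 1)
    (hEmin : ∀ w, Emin ≤ E w)
    (n : ℕ) (ε : ℝ) (hε0 : 0 ≤ ε) (hε1 : ε ≤ 1 - Emin) :
    ∫ S : Fin n → Z,
        (μ {w | Emin + ε ≤ E w ∧ ∀ i, L w (S i) = 0}).toReal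
          ∂(Measure.pi fun _ => P)
      ≤ (μ {w | Emin + ε ≤ E w}).toReal * (1 - (Emin + ε)) ^ n := by
  classical
  set Q : Measure (Fin n → Z) := Measure.pi fun _ => P with hQ
  set c : ℝ := 1 - (Emin + ε) with hc
  have hc0 : 0 ≤ c := by simp [hc]; linarith
  -- measurability of E
  have hEm : Measurable E := by
    have h1 : Measurable fun w => ∫ z, L w z ∂P :=
      (hLmeas.stronglyMeasurable.integral_prod_right').measurable
    have : E = fun w => ∫ z, L w z ∂P := funext hE
    rw [this]; exact h1
  have hWε : MeasurableSet {w | Emin + ε ≤ E w} :=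
    measurableSet_le measurable_const hEm
  -- the "bad" event in the product space
  set C : Set ((Fin n → Z) × W) :=
    {p | (Emin + ε ≤ E p.2) ∧ ∀ i, L p.2 (p.1 i) = 0} with hCdef
  have hCmeas : MeasurableSet C := by
    have h1 : MeasurableSet {p : (Fin n → Z) × W | Emin + ε ≤ E p.2} :=
      measurableSet_le measurable_const (hEm.comp measurable_snd)
    have h2 : ∀ i, MeasurableSet {p : (Fin n → Z) × W | L p.2 (p.1 i) = 0} := by
      intro i
      have hm : Measurable fun p : (Fin n → Z) × W => L p.2 (p.1 i) :=
        hLmeas.comp (measurable_snd.prodMk ((measurable_pi_apply i).comp measurable_fst))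
      exact hm (measurableSet_singleton 0)
    have : C = {p : (Fin n → Z) × W | Emin + ε ≤ E p.2} ∩
        ⋂ i, {p : (Fin n → Z) × W | L p.2 (p.1 i) = 0} := by
      ext p; simp [hCdef, Set.mem_iInter]
    rw [this]
    exact h1.inter (MeasurableSet.iInter h2)
  -- per-w error probability
  have hLwm : ∀ w, Measurable (L w) := fun w => hLmeas.of_uncurry_left
  have hAmeas : ∀ w, MeasurableSet {z | L w z = 1} := fun w =>
    (hLwm w) (measurableSet_singleton 1)
  have hBmeas : ∀ w, MeasurableSet {z | L w z = 0} := fun w =>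
    (hLwm w) (measurableSet_singleton 0)
  have hEeq : ∀ w, E w = (P {z | L w z = 1}).toReal := by
    intro w
    have hind : L w = Set.indicator {z | L w z = 1} (fun _ => (1 : ℝ)) := by
      funext z
      rcases hL01 w z with h | h <;>
        simp [Set.indicator_apply, h]
    rw [hE w, hind, integral_indicator_const _ (hAmeas w)]
    simp
    rfl
  have hBval : ∀ w, P {z | L w z = 0} = ENNReal.ofReal (1 - E w) := by
    intro w
    have hcomp : {z | L w z = 0} = {z | L w z = 1}ᶜ := by
      ext z; rcases hL01 w z with h | h <;> simp [h]
    rw [hcomp, measure_compl (hAmeas w) (measure_ne_top _ _), measure_univ]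
    have hle : P {z | L w z = 1} ≤ 1 := prob_le_one
    rw [hEeq w]
    rw [ENNReal.ofReal_sub _ ENNReal.toReal_nonneg]
    simp [ENNReal.ofReal_toReal (measure_ne_top _ _)]
  -- bound on P(B w) for bad w
  have hBle : ∀ w, Emin + ε ≤ E w → P {z | L w z = 0} ≤ ENNReal.ofReal c := by
    intro w hw
    rw [hBval w]
    exact ENNReal.ofReal_le_ofReal (by simp [hc]; linarith)
  -- section measure over S: the slice at fixed w
  have hslice : ∀ w, Q ((fun S => (S, w)) ⁻¹' C) =
      Set.indicator {w | Emin + ε ≤ E w} (fun w => (P {z | L w z = 0}) ^ n) w := by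
    intro w
    by_cases hw : Emin + ε ≤ E w
    · have : (fun S => (S, w)) ⁻¹' C = Set.univ.pi (fun _ : Fin n => {z | L w z = 0}) := by
        ext S; simp [hCdef, hw, Set.mem_pi]
      rw [this, hQ, Measure.pi_pi]
      simp [Set.indicator_of_mem, hw, Finset.prod_const]
    · have : (fun S => (S, w)) ⁻¹' C = ∅ := by
        ext S; simp [hCdef, hw]
      rw [this]
      simp [Set.indicator_of_notMem, hw]
  -- main computation
  have key : ∫⁻ S, μ (Prod.mk S ⁻¹' C) ∂Q ≤ ENNReal.ofReal c ^ n * μ {w | Emin + ε ≤ E w} := by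
    have h1 : ∫⁻ S, μ (Prod.mk S ⁻¹' C) ∂Q = (Q.prod μ) C :=
      (Measure.prod_apply hCmeas).symm
    have h2 : (Q.prod μ) C = ∫⁻ w, Q ((fun S => (S, w)) ⁻¹' C) ∂μ :=
      Measure.prod_apply_symm hCmeas
    rw [h1, h2]
    calc ∫⁻ w, Q ((fun S => (S, w)) ⁻¹' C) ∂μ
        ≤ ∫⁻ w, Set.indicator {w | Emin + ε ≤ E w}
            (fun _ => ENNReal.ofReal c ^ n) w ∂μ := by
          apply lintegral_mono
          intro w
          dsimp only
          rw [hslice w]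
          by_cases hw : Emin + ε ≤ E w
          · simp only [Set.indicator_of_mem, hw, Set.mem_setOf_eq]
            exact pow_le_pow_left' (hBle w hw) n
          · simp [Set.indicator_of_notMem, hw]
      _ = ENNReal.ofReal c ^ n * μ {w | Emin + ε ≤ E w} := by
          rw [lintegral_indicator_const hWε]
  -- convert back to real integral
  have hFmeas : Measurable fun S => μ (Prod.mk S ⁻¹' C) :=
    measurable_measure_prodMk_left hCmeas
  have hfin : ∀ᵐ S ∂Q, μ (Prod.mk S ⁻¹' C) < ⊤ :=
    Filter.Eventually.of_forall fun S => measure_lt_top μ _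
  have hset : ∀ S, {w | Emin + ε ≤ E w ∧ ∀ i, L w (S i) = 0} = Prod.mk S ⁻¹' C := by
    intro S; ext w; simp [hCdef]
  have hLHS : ∫ S, (μ {w | Emin + ε ≤ E w ∧ ∀ i, L w (S i) = 0}).toReal ∂Q
      = (∫⁻ S, μ (Prod.mk S ⁻¹' C) ∂Q).toReal := by
    rw [show (fun S => (μ {w | Emin + ε ≤ E w ∧ ∀ i, L w (S i) = 0}).toReal)
        = fun S => (μ (Prod.mk S ⁻¹' C)).toReal from funext fun S => by rw [hset S]]
    exact integral_toReal hFmeas.aemeasurable hfin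
  rw [hLHS]
  have hRfin : ENNReal.ofReal c ^ n * μ {w | Emin + ε ≤ E w} ≠ ⊤ :=
    ENNReal.mul_ne_top (ENNReal.pow_ne_top ENNReal.ofReal_ne_top) (measure_ne_top _ _)
  calc (∫⁻ S, μ (Prod.mk S ⁻¹' C) ∂Q).toReal
      ≤ (ENNReal.ofReal c ^ n * μ {w | Emin + ε ≤ E w}).toReal :=
        ENNReal.toReal_mono hRfin key
    _ = (μ {w | Emin + ε ≤ E w}).toReal * c ^ n := by
        rw [ENNReal.toReal_mul, ENNReal.toReal_pow, ENNReal.toReal_ofReal hc0]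
        ring
    _ = (μ {w | Emin + ε ≤ E w}).toReal * (1 - (Emin + ε)) ^ n := by rw [hc]
end

section
/- (Corollary 1, first inequality) For every n ∈ ℕ and every ε with 0 ≤ ε < 1 − E_min, if ∫_W (1 − E(w))^n dμ(w) > 0 then ⟨ω_ε(S)⟩_S / ⟨ω(S)⟩_S ≤ (Ω_ε/Ω) · 1 / ((1 − g_{ε/2}) + g_{ε/2} · e^{(ε/2)·n}). -/
open MeasureTheory


private lemma corollary1_exp_fac {Emin ε : ℝ} (hEmin0 : 0 ≤ Emin) (hε0 : 0 ≤ ε)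
    (hε1 : ε < 1 - Emin) (n : ℕ) :
    (1 - Emin - ε) ^ n * Real.exp (ε / 2 * n) ≤ (1 - Emin - ε / 2) ^ n := by
  have hfac : Real.exp (ε / 2) * (1 - Emin - ε) ≤ 1 - Emin - ε / 2 := by
    have h3 : Real.exp (ε / 2) * (1 - ε / 2) ≤ 1 := by
      have h1 : 1 - ε / 2 ≤ Real.exp (-(ε / 2)) := by
        have := Real.add_one_le_exp (-(ε / 2)); linarith
      have h2 : Real.exp (ε / 2) * Real.exp (-(ε / 2)) = 1 := by
        rw [← Real.exp_add]; simp
      nlinarith [Real.exp_pos (ε / 2)]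
    nlinarith [Real.one_le_exp (show (0:ℝ) ≤ ε / 2 by linarith)]
  calc (1 - Emin - ε) ^ n * Real.exp (ε / 2 * n)
      = ((1 - Emin - ε) * Real.exp (ε / 2)) ^ n := by
        rw [mul_pow, mul_comm (ε / 2) (n : ℝ), Real.exp_nat_mul]
    _ ≤ (1 - Emin - ε / 2) ^ n := by
        have hbase : (0:ℝ) ≤ 1 - Emin - ε := by linarith
        exact pow_le_pow_left₀ (mul_nonneg hbase (Real.exp_pos _).le) (by nlinarith) n

private lemma corollary1_alg {N D IM IG Ω Ωε g m GG c d e : ℝ}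
    (hN0 : 0 ≤ N) (hNle : N ≤ Ωε * c) (hIM : c * m ≤ IM) (hIG : d * GG ≤ IG)
    (hce : c * e ≤ d) (hD : D = N + IM + IG)
    (hBadR : (1 - g) * Ω = Ωε + m) (hgΩ : g * Ω = GG)
    (hGG0 : 0 ≤ GG) (hm0 : 0 ≤ m) (hΩε0 : 0 ≤ Ωε) (hc0 : 0 ≤ c)
    (he1 : 1 ≤ e) (hg0 : 0 ≤ g) (hΩpos : 0 < Ω) (hDpos : 0 < D) :
    N / D ≤ (Ωε / Ω) * (1 / ((1 - g) + g * e)) := by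
  have hT : 0 < (1 - g) + g * e := by
    have h : g * e - g = g * (e - 1) := by ring
    have h2 := mul_nonneg hg0 (sub_nonneg.2 he1)
    linarith
  have goal' : N * (Ω * ((1 - g) + g * e)) ≤ Ωε * D := by
    have expand : Ω * ((1 - g) + g * e) = (Ωε + m) + GG * e := by
      have h : (1 - g) * Ω + g * Ω * e = (Ωε + m) + GG * e := by rw [hBadR, hgΩ]
      linarith
    rw [expand, hD]
    have t1 : N * m ≤ Ωε * IM := by
      calc N * m ≤ (Ωε * c) * m := mul_le_mul_of_nonneg_right hNle hm0
        _ = Ωε * (c * m) := by ring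
        _ ≤ Ωε * IM := mul_le_mul_of_nonneg_left hIM hΩε0
    have t2 : N * (GG * e) ≤ Ωε * IG := by
      have hGGe : 0 ≤ GG * e := mul_nonneg hGG0 (by linarith)
      calc N * (GG * e) ≤ (Ωε * c) * (GG * e) := mul_le_mul_of_nonneg_right hNle hGGe
        _ = Ωε * ((c * e) * GG) := by ring
        _ ≤ Ωε * (d * GG) :=
            mul_le_mul_of_nonneg_left (mul_le_mul_of_nonneg_right hce hGG0) hΩε0
        _ ≤ Ωε * IG := mul_le_mul_of_nonneg_left hIG hΩε0
    nlinarith [t1, t2]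
  rw [div_le_iff₀ hDpos]
  have hrhs : Ωε / Ω * (1 / ((1 - g) + g * e)) = Ωε / (Ω * ((1 - g) + g * e)) := by
    rw [div_mul_div_comm, mul_one]
  rw [hrhs, div_mul_eq_mul_div, le_div_iff₀ (by positivity)]
  linarith [goal']

/-- Corollary 1, first inequality:
`⟨ω_ε(S)⟩/⟨ω(S)⟩ ≤ (Ω_ε/Ω) · 1/((1 - g_{ε/2}) + g_{ε/2}·e^{(ε/2)n})`. -/
theorem corollary1_first_inequality
    {W Z : Type*} [MeasurableSpace W] [MeasurableSpace Z]
    (μ : Measure W) [IsFiniteMeasure μ] (hΩ : 0 < μ Set.univ)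
    (P : Measure Z) [IsProbabilityMeasure P]
    (L : W → Z → ℝ) (hLmeas : Measurable (Function.uncurry L))
    (hL01 : ∀ w z, L w z = 0 ∨ L w z = 1)
    (E : W → ℝ) (hE : ∀ w, E w = ∫ z, L w z ∂P)
    (Emin : ℝ) (hEmin0 : 0 ≤ Emin) (hEmin1 : Emin ≤ 1)
    (hEmin : ∀ w, Emin ≤ E w)
    (n : ℕ) (ε : ℝ) (hε0 : 0 ≤ ε) (hε1 : ε < 1 - Emin)
    (Ω Ωε g : ℝ)
    (hΩdef : Ω = (μ Set.univ).toReal)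
    (hΩεdef : Ωε = (μ {w | Emin + ε ≤ E w}).toReal)
    (hgdef : g = (μ {w | E w < Emin + ε / 2}).toReal / Ω)
    (hpos : 0 < ∫ w, (1 - E w) ^ n ∂μ) :
    (∫ S : Fin n → Z,
        (μ {w | Emin + ε ≤ E w ∧ ∀ i, L w (S i) = 0}).toReal
          ∂(Measure.pi fun _ => P))
      / (∫ S : Fin n → Z,
          (μ {w | ∀ i, L w (S i) = 0}).toReal ∂(Measure.pi fun _ => P))
      ≤ (Ωε / Ω) * (1 / ((1 - g) + g * Real.exp (ε / 2 * n))) := by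
  have hEmeas : Measurable E := by
    have h1 : StronglyMeasurable fun w => ∫ z, L w z ∂P :=
      hLmeas.stronglyMeasurable.integral_prod_right'
    have hEfun : E = fun w => ∫ z, L w z ∂P := funext hE
    rw [hEfun]; exact h1.measurable
  have hws1 : ∀ w, MeasurableSet {z | L w z = 1} := fun w =>
    (hLmeas.of_uncurry_left) (measurableSet_singleton 1)
  have hEP : ∀ w, E w = (P {z | L w z = 1}).toReal := by
    intro w
    have hind : (fun z => L w z) = Set.indicator {z | L w z = 1} (fun _ => (1 : ℝ)) := by
      funext z
      rcases hL01 w z with h | h <;> simp [Set.indicator_apply, h]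
    rw [hE w]
    calc ∫ z, L w z ∂P = ∫ z, Set.indicator {z | L w z = 1} (fun _ => (1:ℝ)) z ∂P := by
          rw [← hind]
      _ = (P {z | L w z = 1}).toReal := by
          rw [integral_indicator_const _ (hws1 w)]; simp; rfl
  -- q w = P {z | L w z = 0}
  set q : W → ENNReal := fun w => P {z | L w z = 0} with hq_def
  have hqmeas : Measurable q := by
    have hs0 : MeasurableSet {p : W × Z | Function.uncurry L p = 0} :=
      hLmeas (measurableSet_singleton 0)
    exact measurable_measure_prodMk_left (ν := P) hs0
  have hq : ∀ w, (q w).toReal = 1 - E w := by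
    intro w
    have hcompl : {z | L w z = 0} = {z | L w z = 1}ᶜ := by
      ext z; rcases hL01 w z with h | h <;> simp [h]
    rw [hq_def]
    simp only
    rw [hcompl, prob_compl_eq_one_sub (hws1 w),
      ENNReal.toReal_sub_of_le prob_le_one ENNReal.one_ne_top, ENNReal.toReal_one, hEP w]
  -- key Fubini computation
  have key : ∀ A : Set W, MeasurableSet A →
      (∫ S : Fin n → Z, (μ {w | w ∈ A ∧ ∀ i, L w (S i) = 0}).toReal
          ∂(Measure.pi fun _ => P))
        = ∫ w in A, (1 - E w) ^ n ∂μ := by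
    intro A hA
    set ν : Measure (Fin n → Z) := Measure.pi fun _ => P with hν
    set s : Set (W × (Fin n → Z)) := {p | p.1 ∈ A ∧ ∀ i, L p.1 (p.2 i) = 0} with hs_def
    have hs : MeasurableSet s := by
      have h1 : MeasurableSet {p : W × (Fin n → Z) | ∀ i, L p.1 (p.2 i) = 0} := by
        have heq : {p : W × (Fin n → Z) | ∀ i, L p.1 (p.2 i) = 0}
            = ⋂ i, (fun p : W × (Fin n → Z) => Function.uncurry L (p.1, p.2 i)) ⁻¹' {0} := by
          ext p; simp [Function.uncurry]
        rw [heq]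
        exact MeasurableSet.iInter fun i =>
          (hLmeas.comp (measurable_fst.prodMk ((measurable_pi_apply i).comp measurable_snd)))
            (measurableSet_singleton 0)
      have heq2 : s = (A ×ˢ (Set.univ : Set (Fin n → Z)))
          ∩ {p | ∀ i, L p.1 (p.2 i) = 0} := by
        ext p; simp [hs_def]
      rw [heq2]; exact (hA.prod MeasurableSet.univ).inter h1
    have step1 : (∫ S : Fin n → Z, (μ {w | w ∈ A ∧ ∀ i, L w (S i) = 0}).toReal ∂ν)
        = ((μ.prod ν) s).toReal := by
      rw [Measure.prod_apply_symm hs,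
        ← integral_toReal ((measurable_measure_prodMk_right hs).aemeasurable)
          (ae_of_all _ fun S => measure_lt_top μ _)]
      rfl
    have step2 : ((μ.prod ν) s).toReal = (∫⁻ w in A, (q w) ^ n ∂μ).toReal := by
      rw [Measure.prod_apply hs]
      congr 1
      rw [← lintegral_indicator hA]
      refine lintegral_congr fun w => ?_
      by_cases hw : w ∈ A
      · have hset : Prod.mk w ⁻¹' s
            = Set.pi Set.univ (fun _ : Fin n => {z | L w z = 0}) := by
          ext S; simp [hs_def, hw, Set.mem_pi]
        rw [hset, Measure.pi_pi]
        simp [hw, Finset.prod_const, hq_def]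
      · have hset : Prod.mk w ⁻¹' s = (∅ : Set (Fin n → Z)) := by
          ext S; simp [hs_def, hw]
        simp [hset, hw]
    have step3 : (∫⁻ w in A, (q w) ^ n ∂μ).toReal = ∫ w in A, (1 - E w) ^ n ∂μ := by
      rw [← integral_toReal ((hqmeas.pow_const n).aemeasurable)
        (ae_of_all _ fun w => ENNReal.pow_lt_top (measure_lt_top P _))]
      refine integral_congr_ae (ae_of_all _ fun w => ?_)
      show (q w ^ n).toReal = (1 - E w) ^ n
      rw [ENNReal.toReal_pow, hq w]
    rw [step1, step2, step3]
  -- names for the sets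
  set A1 : Set W := {w | Emin + ε ≤ E w} with hA1_def
  set M : Set W := {w | Emin + ε / 2 ≤ E w ∧ E w < Emin + ε} with hM_def
  set Good : Set W := {w | E w < Emin + ε / 2} with hGood_def
  set Bad : Set W := {w | Emin + ε / 2 ≤ E w} with hBad_def
  have hA1m : MeasurableSet A1 := measurableSet_le measurable_const hEmeas
  have hMm : MeasurableSet M :=
    (measurableSet_le measurable_const hEmeas).inter (measurableSet_lt hEmeas measurable_const)
  have hGoodm : MeasurableSet Good := measurableSet_lt hEmeas measurable_const
  have hBadm : MeasurableSet Bad := measurableSet_le measurable_const hEmeas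
  set f : W → ℝ := fun w => (1 - E w) ^ n with hf_def
  have hfmeas : Measurable f := (measurable_const.sub hEmeas).pow_const n
  have hE0 : ∀ w, 0 ≤ E w := fun w => hEP w ▸ ENNReal.toReal_nonneg
  have hE1 : ∀ w, E w ≤ 1 := by
    intro w
    rw [hEP w]
    calc (P {z | L w z = 1}).toReal ≤ (1 : ENNReal).toReal :=
          ENNReal.toReal_mono ENNReal.one_ne_top prob_le_one
      _ = 1 := by simp
  have hfnonneg : ∀ w, 0 ≤ f w := fun w => pow_nonneg (by linarith [hE1 w]) n
  have hfint : Integrable f μ := by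
    refine ⟨hfmeas.aestronglyMeasurable, HasFiniteIntegral.of_bounded (C := 1)
      (ae_of_all _ fun w => ?_)⟩
    rw [Real.norm_eq_abs, abs_of_nonneg (hfnonneg w)]
    exact pow_le_one₀ (by linarith [hE1 w]) (by linarith [hEmin0, hEmin w])
  -- rewrite numerator and denominator
  have hnum : (∫ S : Fin n → Z,
      (μ {w | Emin + ε ≤ E w ∧ ∀ i, L w (S i) = 0}).toReal ∂(Measure.pi fun _ => P))
      = ∫ w in A1, f w ∂μ := key A1 hA1m
  have hden : (∫ S : Fin n → Z,
      (μ {w | ∀ i, L w (S i) = 0}).toReal ∂(Measure.pi fun _ => P))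
      = ∫ w, f w ∂μ := by
    have h := key Set.univ MeasurableSet.univ
    simp only [Set.mem_univ, true_and] at h
    rw [h, setIntegral_univ]
  rw [hnum, hden]
  -- constants
  set c : ℝ := (1 - Emin - ε) ^ n with hc_def
  set d : ℝ := (1 - Emin - ε / 2) ^ n with hd_def
  set e : ℝ := Real.exp (ε / 2 * (n : ℝ)) with he_def
  have hbase : (0:ℝ) ≤ 1 - Emin - ε := by linarith
  have hc0 : 0 ≤ c := pow_nonneg hbase n
  have he1 : (1:ℝ) ≤ e := Real.one_le_exp (by positivity)
  have hce : c * e ≤ d := corollary1_exp_fac hEmin0 hε0 hε1 n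
  -- integral bounds
  set N : ℝ := ∫ w in A1, f w ∂μ with hN_def
  have hN0 : 0 ≤ N := setIntegral_nonneg hA1m fun w _ => hfnonneg w
  have hNle : N ≤ Ωε * c := by
    have h : ∫ w in A1, f w ∂μ ≤ ∫ _ in A1, c ∂μ := by
      refine setIntegral_mono_on hfint.integrableOn (integrableOn_const (measure_ne_top μ _)) hA1m ?_
      · intro w hw
        refine pow_le_pow_left₀ (by linarith [hE1 w]) ?_ n
        simp only [hA1_def, Set.mem_setOf_eq] at hw
        linarith
    rw [setIntegral_const, smul_eq_mul, measureReal_def, ← hΩεdef] at h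
    exact h
  set m : ℝ := (μ M).toReal with hm_def
  set GG : ℝ := (μ Good).toReal with hGG_def
  have hIM : c * m ≤ ∫ w in M, f w ∂μ := by
    refine setIntegral_ge_of_const_le_real hMm (measure_ne_top μ _) ?_ hfint.integrableOn
    intro w hw
    simp only [hM_def, Set.mem_setOf_eq] at hw
    exact pow_le_pow_left₀ hbase (by linarith [hw.2]) n
  have hIG : d * GG ≤ ∫ w in Good, f w ∂μ := by
    refine setIntegral_ge_of_const_le_real hGoodm (measure_ne_top μ _) ?_ hfint.integrableOn
    intro w hw
    simp only [hGood_def, Set.mem_setOf_eq] at hw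
    exact pow_le_pow_left₀ (by linarith) (by linarith) n
  -- decomposition of the denominator
  have hBadunion : Bad = A1 ∪ M := by
    ext w
    simp only [hBad_def, hA1_def, hM_def, Set.mem_setOf_eq, Set.mem_union]
    constructor
    · intro h
      rcases lt_or_ge (E w) (Emin + ε) with h' | h'
      · exact Or.inr ⟨h, h'⟩
      · exact Or.inl h'
    · rintro (h | ⟨h, _⟩) <;> linarith
  have hdisj : Disjoint A1 M := by
    rw [Set.disjoint_left]
    intro w hw hw'
    simp only [hA1_def, Set.mem_setOf_eq] at hw
    simp only [hM_def, Set.mem_setOf_eq] at hw'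
    linarith [hw'.2]
  have hGoodc : Good = Badᶜ := by
    ext w; simp [hGood_def, hBad_def, not_le]
  have hDsplit : ∫ w, f w ∂μ = N + (∫ w in M, f w ∂μ) + ∫ w in Good, f w ∂μ := by
    have h1 : (∫ w in Bad, f w ∂μ) + (∫ w in Badᶜ, f w ∂μ) = ∫ w, f w ∂μ :=
      integral_add_compl hBadm hfint
    have h2 : ∫ w in Bad, f w ∂μ = N + ∫ w in M, f w ∂μ := by
      rw [hBadunion, setIntegral_union hdisj hMm hfint.integrableOn hfint.integrableOn, hN_def]
    rw [← h1, h2, ← hGoodc]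
  -- measure arithmetic
  have hΩpos : 0 < Ω := by
    rw [hΩdef]; exact ENNReal.toReal_pos hΩ.ne' (measure_ne_top μ _)
  have hgΩ : g * Ω = GG := by
    rw [hgdef]; field_simp [hGG_def]
  have hBadR : (1 - g) * Ω = Ωε + m := by
    have hBG : μ Bad + μ Good = μ Set.univ := by
      rw [hGoodc]; exact measure_add_measure_compl hBadm
    have hBAM : μ Bad = μ A1 + μ M := by rw [hBadunion]; exact measure_union hdisj hMm
    have h1 : (μ Bad).toReal = Ωε + m := by
      rw [hBAM, ENNReal.toReal_add (measure_ne_top μ _) (measure_ne_top μ _), hΩεdef, hm_def]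
    have h2 : (μ Bad).toReal + GG = Ω := by
      rw [hGG_def, ← ENNReal.toReal_add (measure_ne_top μ _) (measure_ne_top μ _), hBG, hΩdef]
    have h3 : g * Ω = GG := hgΩ
    linarith
  have hGG0 : 0 ≤ GG := ENNReal.toReal_nonneg
  have hm0 : 0 ≤ m := ENNReal.toReal_nonneg
  have hΩε0 : 0 ≤ Ωε := by rw [hΩεdef]; exact ENNReal.toReal_nonneg
  have hg0 : 0 ≤ g := by rw [hgdef]; positivity
  have hDpos : 0 < ∫ w, f w ∂μ := hpos
  exact corollary1_alg hN0 hNle hIM hIG hce hDsplit hBadR hgΩ hGG0 hm0 hΩε0 hc0 he1 hg0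
    hΩpos hDpos
end

section
/- (Corollary 1, exponential decay) For every n ∈ ℕ and every ε with 0 ≤ ε < 1 − E_min, if g_{ε/2} > 0 then ∫_W (1 − E(w))^n dμ(w) > 0 and ⟨ω_ε(S)⟩_S / ⟨ω(S)⟩_S ≤ (1/g_{ε/2}) · e^{−(ε/2)·n}. -/
open MeasureTheory
open scoped ENNReal

/-- Fubini-type key lemma: the expected measure of the set of `w ∈ V` consistent
with all `n` samples equals the integral over `V` of `P{L w · = 0}^n`. -/
lemma corr1_key {W Z : Type*} [MeasurableSpace W] [MeasurableSpace Z]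
    (μ : Measure W) [IsFiniteMeasure μ]
    (P : Measure Z) [IsProbabilityMeasure P]
    (L : W → Z → ℝ) (hLmeas : Measurable (Function.uncurry L))
    (n : ℕ) (V : Set W) (hV : MeasurableSet V) :
    ∫⁻ S : Fin n → Z, μ {w | w ∈ V ∧ ∀ i, L w (S i) = 0} ∂(Measure.pi fun _ => P)
      = ∫⁻ w in V, (P {z | L w z = 0}) ^ n ∂μ := by
  set ν : Measure (Fin n → Z) := Measure.pi fun _ => P with hν
  have hT : MeasurableSet {p : W × (Fin n → Z) | p.1 ∈ V ∧ ∀ i, L p.1 (p.2 i) = 0} := by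
    have h1 : {p : W × (Fin n → Z) | p.1 ∈ V ∧ ∀ i, L p.1 (p.2 i) = 0}
        = (Prod.fst ⁻¹' V) ∩ ⋂ i, {p : W × (Fin n → Z) | L p.1 (p.2 i) = 0} := by
      ext p; simp [Set.mem_iInter]
    rw [h1]
    refine (measurable_fst hV).inter (MeasurableSet.iInter fun i => ?_)
    have : Measurable fun p : W × (Fin n → Z) => L p.1 (p.2 i) :=
      hLmeas.comp (measurable_fst.prodMk ((measurable_pi_apply i).comp measurable_snd))
    exact this (measurableSet_singleton 0)
  set T := {p : W × (Fin n → Z) | p.1 ∈ V ∧ ∀ i, L p.1 (p.2 i) = 0} with hTdef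
  have hswap : MeasurableSet (Prod.swap ⁻¹' T : Set ((Fin n → Z) × W)) :=
    hT.preimage measurable_swap
  have step1 : ∫⁻ S : Fin n → Z, μ {w | w ∈ V ∧ ∀ i, L w (S i) = 0} ∂ν
      = (ν.prod μ) (Prod.swap ⁻¹' T) := by
    rw [Measure.prod_apply hswap]
    rfl
  have step2 : (ν.prod μ) (Prod.swap ⁻¹' T) = (μ.prod ν) T := by
    rw [← Measure.prod_swap, Measure.map_apply measurable_swap hswap,
      Set.preimage_preimage]
    simp
  have step3 : (μ.prod ν) T = ∫⁻ w, ν (Prod.mk w ⁻¹' T) ∂μ :=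
    Measure.prod_apply hT
  have hpoint : ∀ w : W, ν {S : Fin n → Z | ∀ i, L w (S i) = 0}
      = (P {z | L w z = 0}) ^ n := by
    intro w
    have hset : {S : Fin n → Z | ∀ i, L w (S i) = 0}
        = Set.pi Set.univ (fun _ => {z | L w z = 0}) := by
      ext S; simp [Set.mem_univ_pi]
    rw [hset, hν, Measure.pi_pi]
    simp
  have step4 : ∫⁻ w, ν (Prod.mk w ⁻¹' T) ∂μ
      = ∫⁻ w in V, (P {z | L w z = 0}) ^ n ∂μ := by
    have hind : ∀ w, ν (Prod.mk w ⁻¹' T)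
        = V.indicator (fun w => (P {z | L w z = 0}) ^ n) w := by
      intro w
      by_cases hw : w ∈ V
      · rw [Set.indicator_of_mem hw, ← hpoint w]
        congr 1
        ext S
        simp [hTdef, hw]
      · rw [Set.indicator_of_notMem hw]
        have : (Prod.mk w ⁻¹' T) = ∅ := by
          ext S; simp [hTdef, hw]
        simp [this]
    simp_rw [hind]
    rw [lintegral_indicator hV]
  rw [step1, step2, step3, step4]

/-- Corollary 1, exponential decay:
if `g_{ε/2} > 0` then `⟨ω(S)⟩ > 0` and
`⟨ω_ε(S)⟩/⟨ω(S)⟩ ≤ (1/g_{ε/2})·e^{-(ε/2)n}`. -/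
theorem corollary1_exponential_decay
    {W Z : Type*} [MeasurableSpace W] [MeasurableSpace Z]
    (μ : Measure W) [IsFiniteMeasure μ] (hΩ : 0 < μ Set.univ)
    (P : Measure Z) [IsProbabilityMeasure P]
    (L : W → Z → ℝ) (hLmeas : Measurable (Function.uncurry L))
    (hL01 : ∀ w z, L w z = 0 ∨ L w z = 1)
    (E : W → ℝ) (hE : ∀ w, E w = ∫ z, L w z ∂P)
    (Emin : ℝ) (hEmin0 : 0 ≤ Emin) (hEmin1 : Emin ≤ 1)
    (hEmin : ∀ w, Emin ≤ E w)
    (n : ℕ) (ε : ℝ) (hε0 : 0 ≤ ε) (hε1 : ε < 1 - Emin)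
    (g : ℝ)
    (hgdef : g = (μ {w | E w < Emin + ε / 2}).toReal / (μ Set.univ).toReal)
    (hgpos : 0 < g) :
    0 < ∫ w, (1 - E w) ^ n ∂μ ∧
    (∫ S : Fin n → Z,
        (μ {w | Emin + ε ≤ E w ∧ ∀ i, L w (S i) = 0}).toReal
          ∂(Measure.pi fun _ => P))
      / (∫ S : Fin n → Z,
          (μ {w | ∀ i, L w (S i) = 0}).toReal ∂(Measure.pi fun _ => P))
      ≤ (1 / g) * Real.exp (-(ε / 2) * n) := by
  classical
  set ν : Measure (Fin n → Z) := Measure.pi fun _ => P with hν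
  -- basic measurability
  have hT1 : MeasurableSet {p : W × Z | L p.1 p.2 = 1} :=
    hLmeas (measurableSet_singleton 1)
  have hT0 : MeasurableSet {p : W × Z | L p.1 p.2 = 0} :=
    hLmeas (measurableSet_singleton 0)
  have hBmeas : ∀ w, MeasurableSet {z | L w z = 1} := fun w =>
    measurable_prodMk_left (m := inferInstance) hT1
  -- E w = (P {L w = 1}).toReal
  have hEeq : ∀ w, E w = (P {z | L w z = 1}).toReal := by
    intro w
    rw [hE w]
    have hfun : (fun z => L w z) = Set.indicator {z | L w z = 1} (fun _ => (1 : ℝ)) := by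
      funext z
      by_cases hz : z ∈ {z | L w z = 1}
      · rw [Set.indicator_of_mem hz]; exact hz
      · rw [Set.indicator_of_notMem hz]
        rcases hL01 w z with h | h
        · exact h
        · exact absurd h hz
    rw [hfun, integral_indicator_const _ (hBmeas w)]
    simp [Measure.real]
  have hE0 : ∀ w, 0 ≤ E w := fun w => (hEeq w) ▸ ENNReal.toReal_nonneg
  have hE1 : ∀ w, E w ≤ 1 := by
    intro w
    rw [hEeq w]
    have h := prob_le_one (μ := P) (s := {z | L w z = 1})
    calc (P {z | L w z = 1}).toReal ≤ (1 : ℝ≥0∞).toReal :=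
          ENNReal.toReal_mono ENNReal.one_ne_top h
      _ = 1 := by simp
  -- P {L w = 0} = ofReal (1 - E w)
  have hA : ∀ w, P {z | L w z = 0} = ENNReal.ofReal (1 - E w) := by
    intro w
    have hcompl : {z | L w z = 0} = {z | L w z = 1}ᶜ := by
      ext z
      simp only [Set.mem_setOf_eq, Set.mem_compl_iff]
      constructor
      · intro h h1; rw [h1] at h; norm_num at h
      · intro h; rcases hL01 w z with h0 | h1
        · exact h0
        · exact absurd h1 h
    rw [hcompl, measure_compl (hBmeas w) (measure_ne_top P _), measure_univ, hEeq w,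
      ENNReal.ofReal_sub _ ENNReal.toReal_nonneg,
      ENNReal.ofReal_toReal (measure_ne_top P _)]
    simp
  -- measurability of E
  have hEmeas : Measurable E := by
    have : E = fun w => (P (Prod.mk w ⁻¹' {p : W × Z | L p.1 p.2 = 1})).toReal := by
      funext w; exact hEeq w
    rw [this]
    exact (measurable_measure_prodMk_left hT1).ennreal_toReal
  -- numbers
  set a : ℝ := 1 - (Emin + ε) with ha
  set b : ℝ := 1 - (Emin + ε / 2) with hb
  have hapos : 0 < a := by simp only [ha]; linarith
  have hbpos : 0 < b := by simp only [hb]; linarith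
  have hble : b ≤ 1 := by simp only [hb]; linarith
  have hΩR : 0 < (μ Set.univ).toReal :=
    ENNReal.toReal_pos hΩ.ne' (measure_ne_top μ _)
  -- the sets
  set Vε : Set W := {w | Emin + ε ≤ E w} with hVε
  set G : Set W := {w | E w < Emin + ε / 2} with hG
  have hVεmeas : MeasurableSet Vε := measurableSet_le measurable_const hEmeas
  have hGmeas : MeasurableSet G := measurableSet_lt hEmeas measurable_const
  have hμG : (μ G).toReal = g * (μ Set.univ).toReal := by
    rw [hgdef]; field_simp
  -- the lintegral identities
  have keyNum : ∫⁻ S : Fin n → Z, μ {w | Emin + ε ≤ E w ∧ ∀ i, L w (S i) = 0} ∂ν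
      = ∫⁻ w in Vε, (P {z | L w z = 0}) ^ n ∂μ :=
    corr1_key μ P L hLmeas n Vε hVεmeas
  have keyDen : ∫⁻ S : Fin n → Z, μ {w | ∀ i, L w (S i) = 0} ∂ν
      = ∫⁻ w, (P {z | L w z = 0}) ^ n ∂μ := by
    have h1 : ∀ S : Fin n → Z, {w | ∀ i, L w (S i) = 0}
        = {w | w ∈ (Set.univ : Set W) ∧ ∀ i, L w (S i) = 0} := by
      intro S; ext w; simp
    simp_rw [h1]
    rw [corr1_key μ P L hLmeas n Set.univ MeasurableSet.univ, Measure.restrict_univ]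
  -- pointwise rewrite of the integrand
  have hpow : ∀ w, (P {z | L w z = 0}) ^ n = ENNReal.ofReal ((1 - E w) ^ n) := by
    intro w
    rw [hA w, ← ENNReal.ofReal_pow (by linarith [hE1 w])]
  have hintmeas : Measurable fun w => (P {z | L w z = 0}) ^ n := by
    have : Measurable fun w => P (Prod.mk w ⁻¹' {p : W × Z | L p.1 p.2 = 0}) :=
      measurable_measure_prodMk_left hT0
    exact this.pow_const n
  have hle1 : ∀ w, (P {z | L w z = 0}) ^ n ≤ 1 := fun w =>
    pow_le_one' (prob_le_one) n
  -- finiteness of the full lintegral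
  have hDenLfin : ∫⁻ w, (P {z | L w z = 0}) ^ n ∂μ ≠ ⊤ := by
    refine ne_top_of_le_ne_top ?_ (lintegral_mono fun w => hle1 w)
    simp [lintegral_one, measure_ne_top]
  have hNumLfin : ∫⁻ w in Vε, (P {z | L w z = 0}) ^ n ∂μ ≠ ⊤ := by
    refine ne_top_of_le_ne_top hDenLfin ?_
    exact setLIntegral_le_lintegral _ _
  -- identify the real integral ∫ (1-E)^n with the toReal of the lintegral
  have hDr : ∫ w, (1 - E w) ^ n ∂μ
      = (∫⁻ w, (P {z | L w z = 0}) ^ n ∂μ).toReal := by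
    rw [integral_eq_lintegral_of_nonneg_ae
      (Filter.Eventually.of_forall fun w => pow_nonneg (by linarith [hE1 w]) n)
      (by exact ((hEmeas.const_sub 1).pow_const n).aestronglyMeasurable)]
    congr 1
    exact lintegral_congr fun w => (hpow w).symm
  -- denominator real integral
  have hDenmeas : Measurable fun S : Fin n → Z => μ {w | ∀ i, L w (S i) = 0} := by
    have hTfull : MeasurableSet {p : W × (Fin n → Z) | ∀ i, L p.1 (p.2 i) = 0} := by
      have h1 : {p : W × (Fin n → Z) | ∀ i, L p.1 (p.2 i) = 0}
          = ⋂ i, {p : W × (Fin n → Z) | L p.1 (p.2 i) = 0} := by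
        ext p; simp [Set.mem_iInter]
      rw [h1]
      refine MeasurableSet.iInter fun i => ?_
      have : Measurable fun p : W × (Fin n → Z) => L p.1 (p.2 i) :=
        hLmeas.comp (measurable_fst.prodMk ((measurable_pi_apply i).comp measurable_snd))
      exact this (measurableSet_singleton 0)
    exact measurable_measure_prodMk_right hTfull
  have hNummeas : Measurable fun S : Fin n → Z =>
      μ {w | Emin + ε ≤ E w ∧ ∀ i, L w (S i) = 0} := by
    have hTfull : MeasurableSet
        {p : W × (Fin n → Z) | Emin + ε ≤ E p.1 ∧ ∀ i, L p.1 (p.2 i) = 0} := by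
      have h1 : {p : W × (Fin n → Z) | Emin + ε ≤ E p.1 ∧ ∀ i, L p.1 (p.2 i) = 0}
          = (Prod.fst ⁻¹' Vε) ∩ ⋂ i, {p : W × (Fin n → Z) | L p.1 (p.2 i) = 0} := by
        ext p; simp [hVε, Set.mem_iInter]
      rw [h1]
      refine (measurable_fst hVεmeas).inter (MeasurableSet.iInter fun i => ?_)
      have : Measurable fun p : W × (Fin n → Z) => L p.1 (p.2 i) :=
        hLmeas.comp (measurable_fst.prodMk ((measurable_pi_apply i).comp measurable_snd))
      exact this (measurableSet_singleton 0)
    exact measurable_measure_prodMk_right hTfull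
  have hDreal : ∫ S : Fin n → Z, (μ {w | ∀ i, L w (S i) = 0}).toReal ∂ν
      = (∫⁻ w, (P {z | L w z = 0}) ^ n ∂μ).toReal := by
    rw [integral_toReal hDenmeas.aemeasurable
      (Filter.Eventually.of_forall fun S => lt_of_le_of_lt (measure_mono (Set.subset_univ _))
        (measure_lt_top μ _)), keyDen]
  have hNreal : ∫ S : Fin n → Z, (μ {w | Emin + ε ≤ E w ∧ ∀ i, L w (S i) = 0}).toReal ∂ν
      = (∫⁻ w in Vε, (P {z | L w z = 0}) ^ n ∂μ).toReal := by
    rw [integral_toReal hNummeas.aemeasurable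
      (Filter.Eventually.of_forall fun S => lt_of_le_of_lt (measure_mono (Set.subset_univ _))
        (measure_lt_top μ _)), keyNum]
  -- lower bound on the denominator
  have hDenlow : ENNReal.ofReal (b ^ n) * μ G ≤ ∫⁻ w, (P {z | L w z = 0}) ^ n ∂μ := by
    have h1 : ∫⁻ w in G, ENNReal.ofReal (b ^ n) ∂μ
        ≤ ∫⁻ w in G, (P {z | L w z = 0}) ^ n ∂μ := by
      refine setLIntegral_mono hintmeas fun w hw => ?_
      rw [hpow w]
      refine ENNReal.ofReal_le_ofReal ?_
      have hwG : E w < Emin + ε / 2 := hw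
      have : b ≤ 1 - E w := by simp only [hb]; linarith
      exact pow_le_pow_left₀ hbpos.le this n
    calc ENNReal.ofReal (b ^ n) * μ G = ∫⁻ _ in G, ENNReal.ofReal (b ^ n) ∂μ := by
          rw [setLIntegral_const]
      _ ≤ ∫⁻ w in G, (P {z | L w z = 0}) ^ n ∂μ := h1
      _ ≤ ∫⁻ w, (P {z | L w z = 0}) ^ n ∂μ := setLIntegral_le_lintegral _ _
  have hDrlow : b ^ n * (g * (μ Set.univ).toReal) ≤ ∫ w, (1 - E w) ^ n ∂μ := by
    rw [hDr, ← hμG]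
    have := ENNReal.toReal_mono hDenLfin hDenlow
    rwa [ENNReal.toReal_mul, ENNReal.toReal_ofReal (by positivity)] at this
  have hDrpos : 0 < ∫ w, (1 - E w) ^ n ∂μ := by
    refine lt_of_lt_of_le ?_ hDrlow
    positivity
  refine ⟨hDrpos, ?_⟩
  -- upper bound on the numerator
  have hNumup : ∫⁻ w in Vε, (P {z | L w z = 0}) ^ n ∂μ
      ≤ ENNReal.ofReal (a ^ n) * μ Set.univ := by
    have h1 : ∫⁻ w in Vε, (P {z | L w z = 0}) ^ n ∂μ
        ≤ ∫⁻ _ in Vε, ENNReal.ofReal (a ^ n) ∂μ := by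
      refine setLIntegral_mono measurable_const fun w hw => ?_
      rw [hpow w]
      refine ENNReal.ofReal_le_ofReal ?_
      have hwV : Emin + ε ≤ E w := hw
      have h2 : 1 - E w ≤ a := by simp only [ha]; linarith
      exact pow_le_pow_left₀ (by linarith [hE1 w]) h2 n
    calc ∫⁻ w in Vε, (P {z | L w z = 0}) ^ n ∂μ ≤ ∫⁻ _ in Vε, ENNReal.ofReal (a ^ n) ∂μ := h1
      _ = ENNReal.ofReal (a ^ n) * μ Vε := by rw [setLIntegral_const]
      _ ≤ ENNReal.ofReal (a ^ n) * μ Set.univ :=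
          mul_le_mul_right (measure_mono (Set.subset_univ _)) _
  have hNrup : ∫ S : Fin n → Z, (μ {w | Emin + ε ≤ E w ∧ ∀ i, L w (S i) = 0}).toReal ∂ν
      ≤ a ^ n * (μ Set.univ).toReal := by
    rw [hNreal]
    have := ENNReal.toReal_mono
      (by exact ENNReal.mul_ne_top ENNReal.ofReal_ne_top (measure_ne_top μ _)) hNumup
    rwa [ENNReal.toReal_mul, ENNReal.toReal_ofReal (by positivity)] at this
  -- final arithmetic
  have hNrnn : 0 ≤ a ^ n * (μ Set.univ).toReal := by positivity
  have hDenpos : 0 < b ^ n * (g * (μ Set.univ).toReal) := by positivity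
  rw [hDreal, ← hDr]
  calc (∫ S : Fin n → Z, (μ {w | Emin + ε ≤ E w ∧ ∀ i, L w (S i) = 0}).toReal ∂ν)
        / ∫ w, (1 - E w) ^ n ∂μ
      ≤ (a ^ n * (μ Set.univ).toReal) / (b ^ n * (g * (μ Set.univ).toReal)) :=
        div_le_div₀ hNrnn hNrup hDenpos hDrlow
    _ = (1 / g) * (a / b) ^ n := by
        rw [div_pow]
        field_simp
    _ ≤ (1 / g) * Real.exp (-(ε / 2) * n) := by
        refine mul_le_mul_of_nonneg_left ?_ (by positivity)
        have hab : a / b ≤ Real.exp (-(ε / 2)) := by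
          have h1 : a / b ≤ 1 - ε / 2 := by
            rw [div_le_iff₀ hbpos]
            nlinarith
          have h2 : 1 - ε / 2 ≤ Real.exp (-(ε / 2)) := by
            have := Real.add_one_le_exp (-(ε / 2))
            linarith
          linarith
        calc (a / b) ^ n ≤ Real.exp (-(ε / 2)) ^ n :=
              pow_le_pow_left₀ (by positivity) hab n
          _ = Real.exp (-(ε / 2) * n) := by
              rw [← Real.exp_nat_mul, mul_comm]
end

section
/- (Generalized Corollary 1, appendix version) For every real a > 1, every n ∈ ℕ and every ε with 0 ≤ ε < 1 − E_min, if ∫_W (1 − E(w))^n dμ(w) > 0 then ⟨ω_ε(S)⟩_S / ⟨ω(S)⟩_S ≤ (Ω_ε/Ω) · 1 / ((1 − g_{ε/a}) + g_{ε/a} · e^{(1 − 1/a)·ε·n}); moreover if g_{ε/a} > 0 then ⟨ω_ε(S)⟩_S / ⟨ω(S)⟩_S ≤ (1/g_{ε/a}) · e^{−(1 − 1/a)·ε·n}. -/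
set_option maxHeartbeats 1000000


open MeasureTheory

lemma cor1_E_meas
    {W Z : Type*} [MeasurableSpace W] [MeasurableSpace Z]
    (P : Measure Z) [IsProbabilityMeasure P]
    (L : W → Z → ℝ) (hLmeas : Measurable (Function.uncurry L))
    (hL01 : ∀ w z, L w z = 0 ∨ L w z = 1)
    (E : W → ℝ) (hE : ∀ w, E w = ∫ z, L w z ∂P) :
    Measurable E ∧ ∀ w, 0 ≤ E w ∧ E w ≤ 1 := by
  have key : ∀ w, E w = (P {z | L w z = 1}).toReal := by
    intro w
    have hLw : Measurable (L w) := hLmeas.of_uncurry_left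
    have hset1 : MeasurableSet {z | L w z = 1} := hLw (measurableSet_singleton 1)
    have hind : L w = Set.indicator {z | L w z = 1} 1 := by
      funext z
      rcases hL01 w z with h | h
      · rw [Set.indicator_of_notMem]
        · exact h
        · simp [Set.mem_setOf_eq, h]
      · rw [h, Set.indicator_of_mem]
        · rfl
        · exact h
    rw [hE w, ← measureReal_def, ← integral_indicator_one hset1]
    exact integral_congr_ae (Filter.Eventually.of_forall fun z => congrFun hind z)
  constructor
  · have hfe : E = fun w => (P (Prod.mk w ⁻¹' (Function.uncurry L ⁻¹' {1}))).toReal :=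
      funext fun w => key w
    rw [hfe]
    exact (measurable_measure_prodMk_left
      (hLmeas (measurableSet_singleton 1))).ennreal_toReal
  · intro w
    rw [key w]
    refine ⟨ENNReal.toReal_nonneg, ?_⟩
    have h1 := prob_le_one (μ := P) (s := {z | L w z = 1})
    calc (P {z | L w z = 1}).toReal ≤ (1 : ENNReal).toReal :=
          ENNReal.toReal_mono ENNReal.one_ne_top h1
      _ = 1 := by simp


lemma cor1_fubini_step
    {W Z : Type*} [MeasurableSpace W] [MeasurableSpace Z]
    (μ : Measure W) [IsFiniteMeasure μ]
    (P : Measure Z) [IsProbabilityMeasure P]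
    (L : W → Z → ℝ) (hLmeas : Measurable (Function.uncurry L))
    (hL01 : ∀ w z, L w z = 0 ∨ L w z = 1)
    (E : W → ℝ) (hE : ∀ w, E w = ∫ z, L w z ∂P)
    (n : ℕ) (V : Set W) (hV : MeasurableSet V) :
    ∫ S : Fin n → Z, (μ {w | w ∈ V ∧ ∀ i, L w (S i) = 0}).toReal
        ∂(Measure.pi fun _ => P)
      = ∫ w in V, (1 - E w) ^ n ∂μ := by
  classical
  set ν : Measure (Fin n → Z) := Measure.pi fun _ => P with hν
  have hνprob : IsProbabilityMeasure ν := by infer_instance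
  -- the measurable set of pairs
  set s0 : Set (W × Z) := Function.uncurry L ⁻¹' {0} with hs0
  have hs0m : MeasurableSet s0 := hLmeas (measurableSet_singleton 0)
  set g : W → ENNReal := fun w => P {z | L w z = 0} with hg
  have hgm : Measurable g := measurable_measure_prodMk_left (ν := P) hs0m
  have hgle : ∀ w, g w ≤ 1 := fun w => prob_le_one
  -- (g w).toReal = 1 - E w
  have hgE : ∀ w, (g w).toReal = 1 - E w := by
    intro w
    have hLw : Measurable (L w) := hLmeas.of_uncurry_left
    have hset1 : MeasurableSet {z | L w z = 1} := hLw (measurableSet_singleton 1)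
    have hind : L w = Set.indicator {z | L w z = 1} 1 := by
      funext z
      rcases hL01 w z with h | h
      · rw [Set.indicator_of_notMem]
        · exact h
        · simp [Set.mem_setOf_eq, h]
      · rw [h, Set.indicator_of_mem]
        · rfl
        · exact h
    have hEw : E w = (P {z | L w z = 1}).toReal := by
      rw [hE w, ← measureReal_def, ← integral_indicator_one hset1]
      exact integral_congr_ae (Filter.Eventually.of_forall fun z => congrFun hind z)
    have hcompl : {z | L w z = 0} = {z | L w z = 1}ᶜ := by
      ext z
      rcases hL01 w z with h | h <;> simp [h]
    have : g w = 1 - P {z | L w z = 1} := by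
      rw [hg]
      simp only
      rw [hcompl, prob_compl_eq_one_sub hset1]
    rw [this, ENNReal.toReal_sub_of_le prob_le_one ENNReal.one_ne_top, ENNReal.toReal_one, hEw]
  -- the big product set
  set B : Set (W × (Fin n → Z)) :=
    {p | p.1 ∈ V ∧ ∀ i, L p.1 (p.2 i) = 0} with hB
  have hBm : MeasurableSet B := by
    have h1 : B = (Prod.fst ⁻¹' V) ∩ ⋂ i : Fin n, ((fun p : W × (Fin n → Z) => L p.1 (p.2 i)) ⁻¹' {0}) := by
      ext p; simp [hB, Set.mem_iInter]
    rw [h1]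
    refine (measurable_fst hV).inter (MeasurableSet.iInter fun i => ?_)
    have : Measurable fun p : W × (Fin n → Z) => L p.1 (p.2 i) :=
      hLmeas.comp (measurable_fst.prodMk ((measurable_pi_apply i).comp measurable_snd))
    exact this (measurableSet_singleton 0)
  -- sections
  have hsec : ∀ S : Fin n → Z, ((fun w => (w, S)) ⁻¹' B) = {w | w ∈ V ∧ ∀ i, L w (S i) = 0} := by
    intro S; rfl
  have hsecw : ∀ w : W, ν (Prod.mk w ⁻¹' B) = Set.indicator V (fun w => (g w) ^ n) w := by
    intro w
    by_cases hw : w ∈ V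
    · rw [Set.indicator_of_mem hw]
      have : Prod.mk w ⁻¹' B = Set.univ.pi (fun _ : Fin n => {z | L w z = 0}) := by
        ext S; simp [hB, Set.mem_pi, hw]
      rw [this, hν, Measure.pi_pi]
      simp [hg]
    · rw [Set.indicator_of_notMem hw]
      have : Prod.mk w ⁻¹' B = ∅ := by
        ext S; simp [hB, hw]
      rw [this, measure_empty]
  -- LHS to lintegral
  have hLHS : ∫ S : Fin n → Z, (μ {w | w ∈ V ∧ ∀ i, L w (S i) = 0}).toReal ∂ν
      = ((μ.prod ν) B).toReal := by
    have hmeasS : Measurable fun S => μ ((fun w => (w, S)) ⁻¹' B) :=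
      measurable_measure_prodMk_right hBm
    rw [show (fun S : Fin n → Z => (μ {w | w ∈ V ∧ ∀ i, L w (S i) = 0}).toReal)
        = fun S => (μ ((fun w => (w, S)) ⁻¹' B)).toReal from rfl]
    rw [integral_toReal hmeasS.aemeasurable
      (Filter.Eventually.of_forall fun S => measure_lt_top μ _)]
    rw [Measure.prod_apply_symm hBm]
  -- RHS
  have hprod : (μ.prod ν) B = ∫⁻ w in V, (g w) ^ n ∂μ := by
    rw [Measure.prod_apply hBm]
    rw [show (fun w => ν (Prod.mk w ⁻¹' B)) = fun w => Set.indicator V (fun w => (g w) ^ n) w from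
      funext hsecw]
    exact lintegral_indicator hV _
  have hRHS : (∫⁻ w in V, (g w) ^ n ∂μ).toReal = ∫ w in V, (1 - E w) ^ n ∂μ := by
    rw [← integral_toReal ((hgm.pow_const n).aemeasurable.restrict)
      (Filter.Eventually.of_forall fun w =>
        lt_of_le_of_lt (pow_le_one' (hgle w) n) (by norm_num))]
    refine setIntegral_congr_fun hV fun w _ => ?_
    rw [ENNReal.toReal_pow, hgE w]
  rw [hLHS, hprod, hRHS]


/-- Generalized Corollary 1 (appendix version), for any `a > 1`. -/
theorem corollary1_general_a
    {W Z : Type*} [MeasurableSpace W] [MeasurableSpace Z]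
    (μ : Measure W) [IsFiniteMeasure μ] (hΩ : 0 < μ Set.univ)
    (P : Measure Z) [IsProbabilityMeasure P]
    (L : W → Z → ℝ) (hLmeas : Measurable (Function.uncurry L))
    (hL01 : ∀ w z, L w z = 0 ∨ L w z = 1)
    (E : W → ℝ) (hE : ∀ w, E w = ∫ z, L w z ∂P)
    (Emin : ℝ) (hEmin0 : 0 ≤ Emin) (hEmin1 : Emin ≤ 1)
    (hEmin : ∀ w, Emin ≤ E w)
    (a : ℝ) (ha : 1 < a)
    (n : ℕ) (ε : ℝ) (hε0 : 0 ≤ ε) (hε1 : ε < 1 - Emin)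
    (Ω Ωε g : ℝ)
    (hΩdef : Ω = (μ Set.univ).toReal)
    (hΩεdef : Ωε = (μ {w | Emin + ε ≤ E w}).toReal)
    (hgdef : g = (μ {w | E w < Emin + ε / a}).toReal / Ω)
    (hpos : 0 < ∫ w, (1 - E w) ^ n ∂μ) :
    (∫ S : Fin n → Z,
        (μ {w | Emin + ε ≤ E w ∧ ∀ i, L w (S i) = 0}).toReal
          ∂(Measure.pi fun _ => P))
      / (∫ S : Fin n → Z,
          (μ {w | ∀ i, L w (S i) = 0}).toReal ∂(Measure.pi fun _ => P))
      ≤ (Ωε / Ω) * (1 / ((1 - g) + g * Real.exp ((1 - 1 / a) * ε * n))) ∧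
    (0 < g →
      (∫ S : Fin n → Z,
          (μ {w | Emin + ε ≤ E w ∧ ∀ i, L w (S i) = 0}).toReal
            ∂(Measure.pi fun _ => P))
        / (∫ S : Fin n → Z,
            (μ {w | ∀ i, L w (S i) = 0}).toReal ∂(Measure.pi fun _ => P))
        ≤ (1 / g) * Real.exp (-(1 - 1 / a) * ε * n)) := by
  classical
  obtain ⟨hEmeas, hEbd⟩ := cor1_E_meas P L hLmeas hL01 E hE
  have ha0 : (0:ℝ) < a := lt_trans one_pos ha
  have hεa : ε / a ≤ ε := div_le_self hε0 ha.le
  have hεa0 : 0 ≤ ε / a := div_nonneg hε0 ha0.le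
  -- sets
  set Wε : Set W := {w | Emin + ε ≤ E w} with hWεdef
  have hWεm : MeasurableSet Wε := measurableSet_le measurable_const hEmeas
  set A : Set W := {w | E w < Emin + ε / a} with hAdef
  have hAm : MeasurableSet A := measurableSet_lt hEmeas measurable_const
  have hsub : A ⊆ Wεᶜ := by
    intro w hw
    simp only [hAdef, Set.mem_setOf_eq] at hw
    simp only [hWεdef, Set.mem_compl_iff, Set.mem_setOf_eq, not_le]
    linarith
  -- F and its properties
  set F : W → ℝ := fun w => (1 - E w) ^ n with hFdef
  have hF0 : ∀ w, 0 ≤ F w := fun w => pow_nonneg (by linarith [(hEbd w).2]) n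
  have hF1 : ∀ w, F w ≤ 1 := fun w =>
    pow_le_one₀ (by linarith [(hEbd w).2]) (by linarith [(hEbd w).1])
  have hFmeas : Measurable F := (measurable_const.sub hEmeas).pow_const n
  have hFint : Integrable F μ := by
    refine ⟨hFmeas.aestronglyMeasurable, HasFiniteIntegral.of_bounded (C := 1) ?_⟩
    filter_upwards with w
    rw [Real.norm_eq_abs, abs_of_nonneg (hF0 w)]
    exact hF1 w
  -- identify numerator and denominator via Fubini
  set ν : Measure (Fin n → Z) := Measure.pi fun _ => P with hν
  have hnum : (∫ S : Fin n → Z,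
      (μ {w | Emin + ε ≤ E w ∧ ∀ i, L w (S i) = 0}).toReal ∂ν)
      = ∫ w in Wε, F w ∂μ :=
    cor1_fubini_step μ P L hLmeas hL01 E hE n Wε hWεm
  have hden : (∫ S : Fin n → Z, (μ {w | ∀ i, L w (S i) = 0}).toReal ∂ν)
      = ∫ w, F w ∂μ := by
    have h := cor1_fubini_step μ P L hLmeas hL01 E hE n Set.univ MeasurableSet.univ
    rw [Measure.restrict_univ] at h
    rw [← h]
    congr 1
    funext S
    congr 1
    simp
  set N : ℝ := ∫ w in Wε, F w ∂μ with hNdef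
  set D : ℝ := ∫ w, F w ∂μ with hDdef
  have hD : 0 < D := hpos
  set K : ℝ := ∫ w in Wεᶜ, F w ∂μ with hKdef
  have hDNK : N + K = D := integral_add_compl hWεm hFint
  have hN0 : 0 ≤ N := setIntegral_nonneg hWεm fun w _ => hF0 w
  have hK0 : 0 ≤ K := setIntegral_nonneg hWεm.compl fun w _ => hF0 w
  -- real constants
  have hΩpos : 0 < Ω := by
    rw [hΩdef]; exact ENNReal.toReal_pos hΩ.ne' (measure_ne_top μ _)
  have hΩε0 : 0 ≤ Ωε := hΩεdef ▸ ENNReal.toReal_nonneg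
  have hΩεΩ : Ωε ≤ Ω := by
    rw [hΩεdef, hΩdef]
    exact ENNReal.toReal_mono (measure_ne_top μ _) (measure_mono (Set.subset_univ _))
  have hgΩ : g * Ω = (μ A).toReal := by
    rw [hgdef, hAdef]; exact div_mul_cancel₀ _ hΩpos.ne'
  have hg0 : 0 ≤ g := by
    rw [hgdef]; exact div_nonneg ENNReal.toReal_nonneg hΩpos.le
  -- Ωε + g*Ω ≤ Ω
  have hsum : Ωε + g * Ω ≤ Ω := by
    rw [hgΩ, hΩεdef, hΩdef]
    have hdisj : Disjoint Wε A := by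
      rw [Set.disjoint_left]
      intro w hw hw'
      exact (hsub hw') hw
    have h1 : μ Wε + μ A ≤ μ Set.univ := by
      rw [← measure_union hdisj hAm]
      exact measure_mono (Set.subset_univ _)
    have h2 : (μ Wε + μ A).toReal = (μ Wε).toReal + (μ A).toReal :=
      ENNReal.toReal_add (measure_ne_top μ _) (measure_ne_top μ _)
    calc (μ Wε).toReal + (μ A).toReal = (μ Wε + μ A).toReal := h2.symm
      _ ≤ (μ Set.univ).toReal := ENNReal.toReal_mono (measure_ne_top μ _) h1
  have hg1 : g ≤ 1 := by
    have : g * Ω ≤ Ω := by linarith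
    exact le_of_mul_le_mul_right (by linarith [this]) hΩpos
  -- constants c, ca
  set c : ℝ := (1 - Emin - ε) ^ n with hcdef
  set ca : ℝ := (1 - Emin - ε / a) ^ n with hcadef
  have hx0 : (0:ℝ) < 1 - Emin - ε := by linarith
  have hxa0 : (0:ℝ) < 1 - Emin - ε / a := by linarith
  have hcpos : 0 < c := pow_pos hx0 n
  -- N ≤ Ωε * c
  have hNle : N ≤ Ωε * c := by
    have h1 : ∫ w in Wε, F w ∂μ ≤ ∫ w in Wε, c ∂μ := by
      refine setIntegral_mono_on hFint.integrableOn (integrableOn_const ?_) hWεm ?_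
      · exact measure_ne_top μ _
      · intro w hw
        simp only [hWεdef, Set.mem_setOf_eq] at hw
        exact pow_le_pow_left₀ (by linarith [(hEbd w).2]) (by linarith) n
    calc N ≤ ∫ w in Wε, c ∂μ := h1
      _ = (μ Wε).toReal • c := setIntegral_const c
      _ = Ωε * c := by rw [smul_eq_mul, hΩεdef]
  -- lower bound on K
  have hKge : ((Ω - Ωε) - g * Ω) * c + (g * Ω) * ca ≤ K := by
    have hsplit : Wεᶜ = A ∪ (Wεᶜ \ A) := (Set.union_diff_cancel hsub).symm
    have hmdm : MeasurableSet (Wεᶜ \ A) := hWεm.compl.diff hAm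
    have hKsplit : K = (∫ w in A, F w ∂μ) + ∫ w in Wεᶜ \ A, F w ∂μ := by
      have hu := setIntegral_union (f := F) (μ := μ) Set.disjoint_sdiff_right hmdm
        hFint.integrableOn hFint.integrableOn
      rw [← hsplit] at hu
      rw [hKdef]
      exact hu
    have hA_lb : ca * (μ A).toReal ≤ ∫ w in A, F w ∂μ := by
      refine setIntegral_ge_of_const_le_real hAm (measure_ne_top μ _) ?_ hFint.integrableOn
      intro w hw
      simp only [hAdef, Set.mem_setOf_eq] at hw
      exact pow_le_pow_left₀ hxa0.le (by linarith) n
    have hM_lb : c * (μ (Wεᶜ \ A)).toReal ≤ ∫ w in Wεᶜ \ A, F w ∂μ := by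
      refine setIntegral_ge_of_const_le_real hmdm (measure_ne_top μ _) ?_ hFint.integrableOn
      intro w hw
      have hw1 : w ∈ Wεᶜ := hw.1
      simp only [hWεdef, Set.mem_compl_iff, Set.mem_setOf_eq, not_le] at hw1
      exact pow_le_pow_left₀ hx0.le (by linarith) n
    have hmA : (μ A).toReal = g * Ω := hgΩ.symm
    have hmM : (μ (Wεᶜ \ A)).toReal = (Ω - Ωε) - g * Ω := by
      have h1 : μ (Wεᶜ \ A) = μ Wεᶜ - μ A :=
        measure_diff hsub hAm.nullMeasurableSet (measure_ne_top μ _)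
      have h2 : μ Wεᶜ = μ Set.univ - μ Wε := measure_compl hWεm (measure_ne_top μ _)
      rw [h1, h2]
      rw [ENNReal.toReal_sub_of_le (by
          rw [← h2]; exact measure_mono hsub) (by
          exact (tsub_le_self.trans_lt (measure_lt_top μ _)).ne)]
      rw [ENNReal.toReal_sub_of_le (measure_mono (Set.subset_univ _)) (measure_ne_top μ _)]
      rw [← hΩdef, ← hΩεdef, hgΩ]
    rw [hmA] at hA_lb
    rw [hmM] at hM_lb
    rw [hKsplit]
    linarith
  -- c * exp(δ n) ≤ ca
  set en : ℝ := Real.exp ((1 - 1 / a) * ε * n) with hen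
  have hδ0 : 0 ≤ (1 - 1 / a) * ε := by
    have : 1 / a ≤ 1 := by
      rw [div_le_one ha0]; exact ha.le
    nlinarith
  have hen1 : 1 ≤ en := by
    rw [hen]
    exact Real.one_le_exp (by positivity)
  have hcae : c * en ≤ ca := by
    set δ : ℝ := (1 - 1 / a) * ε with hδ
    set x : ℝ := 1 - Emin - ε with hxdef
    have hxd : x + δ = 1 - Emin - ε / a := by
      rw [hxdef, hδ]; field_simp; ring
    have hexp1 : (1 - δ) * Real.exp δ ≤ 1 := by
      have h1 : 1 - δ ≤ Real.exp (-δ) := by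
        have := Real.add_one_le_exp (-δ); linarith
      have h2 : (1 - δ) * Real.exp δ ≤ Real.exp (-δ) * Real.exp δ :=
        mul_le_mul_of_nonneg_right h1 (Real.exp_pos δ).le
      rw [← Real.exp_add] at h2
      simpa using h2
    have hsum1 : x + δ ≤ 1 := by rw [hxd]; linarith
    have hbase : x * Real.exp δ ≤ x + δ := by
      have h3 : 0 ≤ (1 - δ) - x := by linarith
      have h4 : 0 ≤ Real.exp δ - 1 := by
        have := Real.add_one_le_exp δ
        have hδ0' : 0 ≤ δ := hδ0
        linarith
      nlinarith [mul_nonneg h3 h4]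
    have hpow := pow_le_pow_left₀ (mul_nonneg hx0.le (Real.exp_pos δ).le)
      (hxd ▸ hbase) n
    rw [mul_pow, ← Real.exp_nat_mul] at hpow
    calc c * en = x ^ n * Real.exp (↑n * δ) := by
          rw [hen, hcdef, hxdef, mul_comm (δ:ℝ) (n:ℝ)]
      _ ≤ ca := hpow
  -- main bound: N / D ≤ Ωε / (Ω * R)
  set R : ℝ := (1 - g) + g * en with hRdef
  have hR1 : 1 ≤ R := by
    rw [hRdef]
    have := mul_nonneg hg0 (by linarith : (0:ℝ) ≤ en - 1)
    linarith
  have hRpos : 0 < Ω * R := mul_pos hΩpos (lt_of_lt_of_le one_pos hR1)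
  have hstep : c * (Ω * R) ≤ c * Ωε + K := by
    have h1 : (g * Ω) * (c * en) ≤ (g * Ω) * ca :=
      mul_le_mul_of_nonneg_left hcae (by positivity)
    have h2 : c * (Ω * R) = ((Ω - Ωε) - g * Ω) * c + (g * Ω) * (c * en) + c * Ωε := by
      rw [hRdef]; ring
    linarith
  have hkey : N * (Ω * R) ≤ Ωε * D := by
    have h1 : N * (c * (Ω * R)) ≤ N * (c * Ωε + K) :=
      mul_le_mul_of_nonneg_left hstep hN0
    have h2 : N * K ≤ (Ωε * c) * K := mul_le_mul_of_nonneg_right hNle hK0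
    have h4 : (Ωε * D) * c = (c * Ωε) * N + (Ωε * c) * K := by rw [← hDNK]; ring
    have h3 : N * (Ω * R) * c ≤ (Ωε * D) * c := by
      linarith
    exact le_of_mul_le_mul_right h3 hcpos
  have hmain : N / D ≤ Ωε / (Ω * R) := (div_le_div_iff₀ hD hRpos).mpr hkey
  constructor
  · rw [hnum, hden]
    calc N / D ≤ Ωε / (Ω * R) := hmain
      _ = (Ωε / Ω) * (1 / R) := by rw [div_mul_div_comm, mul_one]
  · intro hgpos
    rw [hnum, hden]
    have hgen : 0 < g * en := mul_pos hgpos (lt_of_lt_of_le one_pos hen1)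
    have hRHS : (1 / g) * Real.exp (-(1 - 1 / a) * ε * ↑n) = 1 / (g * en) := by
      rw [show -(1 - 1 / a) * ε * (n:ℝ) = -((1 - 1 / a) * ε * (n:ℝ)) by ring,
        Real.exp_neg, ← hen]
      field_simp
    rw [hRHS]
    calc N / D ≤ Ωε / (Ω * R) := hmain
      _ ≤ 1 / (g * en) := by
          rw [div_le_div_iff₀ hRpos hgen]
          have hgeR : g * en ≤ R := by rw [hRdef]; linarith
          calc Ωε * (g * en) ≤ Ω * R :=
                mul_le_mul hΩεΩ hgeR hgen.le hΩpos.le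
            _ = 1 * (Ω * R) := (one_mul _).symm
end

section
/- (Probability of a non-small fraction of bad minima) Fix n ∈ ℕ and 0 ≤ ε < 1 − E_min with g_{ε/2} > 0. Assume ω(S) > 0 for P^n-almost every S, that ω, ω_ε and φ_ε := ω_ε/ω are P^n-integrable, and that ⟨φ_ε·ω⟩_S − ⟨φ_ε⟩_S·⟨ω⟩_S ≥ 0 (no negative correlation). Then for every γ > 0, P^n({S ∈ Z^n : φ_ε(S) ≥ γ}) ≤ (1/γ)·⟨ω_ε(S)⟩_S/⟨ω(S)⟩_S ≤ (1/(γ·g_{ε/2}))·e^{−(ε/2)·n}. -/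
open MeasureTheory

/-- Probability of a non-small fraction of bad minima (Markov bound):
`P^n{φ_ε ≥ γ} ≤ (1/γ)·⟨ω_ε⟩/⟨ω⟩ ≤ (1/(γ·g_{ε/2}))·e^{-(ε/2)n}`. -/
theorem prob_bad_fraction_large
    {W Z : Type*} [MeasurableSpace W] [MeasurableSpace Z]
    (μ : Measure W) [IsFiniteMeasure μ] (hΩ : 0 < μ Set.univ)
    (P : Measure Z) [IsProbabilityMeasure P]
    (L : W → Z → ℝ) (hLmeas : Measurable (Function.uncurry L))
    (hL01 : ∀ w z, L w z = 0 ∨ L w z = 1)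
    (E : W → ℝ) (hE : ∀ w, E w = ∫ z, L w z ∂P)
    (Emin : ℝ) (hEmin0 : 0 ≤ Emin) (hEmin1 : Emin ≤ 1)
    (hEmin : ∀ w, Emin ≤ E w)
    (n : ℕ) (ε : ℝ) (hε0 : 0 ≤ ε) (hε1 : ε < 1 - Emin)
    (g : ℝ)
    (hgdef : g = (μ {w | E w < Emin + ε / 2}).toReal / (μ Set.univ).toReal)
    (hgpos : 0 < g)
    (ω ωε φ : (Fin n → Z) → ℝ)
    (hωdef : ∀ S, ω S = (μ {w | ∀ i, L w (S i) = 0}).toReal)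
    (hωεdef : ∀ S, ωε S = (μ {w | Emin + ε ≤ E w ∧ ∀ i, L w (S i) = 0}).toReal)
    (hφdef : ∀ S, φ S = ωε S / ω S)
    (hωpos : ∀ᵐ S ∂(Measure.pi fun _ : Fin n => P), 0 < ω S)
    (hωint : Integrable ω (Measure.pi fun _ : Fin n => P))
    (hωεint : Integrable ωε (Measure.pi fun _ : Fin n => P))
    (hφint : Integrable φ (Measure.pi fun _ : Fin n => P))
    (hcorr : 0 ≤ ∫ S, φ S * ω S ∂(Measure.pi fun _ : Fin n => P)
        - (∫ S, φ S ∂(Measure.pi fun _ : Fin n => P))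
          * (∫ S, ω S ∂(Measure.pi fun _ : Fin n => P)))
    (γ : ℝ) (hγ : 0 < γ) :
    ((Measure.pi fun _ : Fin n => P) {S | γ ≤ φ S}).toReal
        ≤ (1 / γ) * ((∫ S, ωε S ∂(Measure.pi fun _ : Fin n => P))
            / (∫ S, ω S ∂(Measure.pi fun _ : Fin n => P))) ∧
    (1 / γ) * ((∫ S, ωε S ∂(Measure.pi fun _ : Fin n => P))
        / (∫ S, ω S ∂(Measure.pi fun _ : Fin n => P)))
      ≤ (1 / (γ * g)) * Real.exp (-(ε / 2) * n) := by
  classical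
  set ν : Measure (Fin n → Z) := Measure.pi fun _ : Fin n => P with hνdef
  -- measurability of E
  have hEmeas : Measurable E := by
    have : StronglyMeasurable fun w => ∫ z, Function.uncurry L (w, z) ∂P :=
      hLmeas.stronglyMeasurable.integral_prod_right'
    have h2 : Measurable fun w => ∫ z, L w z ∂P := this.measurable
    have : E = fun w => ∫ z, L w z ∂P := funext hE
    rw [this]; exact h2
  -- q w = P {z | L w z = 0}
  set q : W → ENNReal := fun w => P {z | L w z = 0} with hqdef
  have hs0meas : MeasurableSet {p : W × Z | Function.uncurry L p = 0} :=
    hLmeas (measurableSet_singleton 0)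
  have hqmeas : Measurable q := by
    have := measurable_measure_prodMk_left (ν := P) hs0meas
    exact this
  have hLwmeas : ∀ w, Measurable (L w) := fun w =>
    hLmeas.comp measurable_prodMk_left
  -- E w = (P {L w = 1}).toReal
  have hEval : ∀ w, P {z | L w z = 1} = ENNReal.ofReal (E w) := by
    intro w
    have hset : MeasurableSet {z | L w z = 1} := hLwmeas w (measurableSet_singleton 1)
    have hfun : L w = Set.indicator {z | L w z = 1} (fun _ => (1 : ℝ)) := by
      funext z
      rcases hL01 w z with h | h
      · rw [h, Set.indicator_of_notMem]; simp [h]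
      · rw [h, Set.indicator_of_mem]; exact h
    have : E w = (P {z | L w z = 1}).toReal := by
      rw [hE w, hfun, integral_indicator_const (1 : ℝ) hset]; simp; rfl
    rw [this, ENNReal.ofReal_toReal (measure_ne_top P _)]
  have hE0 : ∀ w, 0 ≤ E w := by
    intro w
    have := hEval w
    have h : ENNReal.ofReal (E w) = P {z | L w z = 1} := (hEval w).symm
    by_contra hneg
    push_neg at hneg
    rw [ENNReal.ofReal_eq_zero.mpr hneg.le] at h
    have := hEmin w
    -- Emin ≤ E w < 0 contradicts 0 ≤ Emin
    linarith [hEmin w]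
  have hqE : ∀ w, q w = ENNReal.ofReal (1 - E w) := by
    intro w
    have hset : MeasurableSet {z | L w z = 1} := hLwmeas w (measurableSet_singleton 1)
    have hcompl : {z | L w z = 0} = {z | L w z = 1}ᶜ := by
      ext z
      rcases hL01 w z with h | h <;> simp [h]
    have : q w = 1 - P {z | L w z = 1} := by
      rw [hqdef]; simp only; rw [hcompl, prob_compl_eq_one_sub hset]
    rw [this, hEval w, ← ENNReal.ofReal_one, ← ENNReal.ofReal_sub _ (hE0 w)]
  -- the key Fubini computation
  have key : ∀ B : Set W, MeasurableSet B →
      (∫ S, (μ {w | w ∈ B ∧ ∀ i, L w (S i) = 0}).toReal ∂ν)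
        = (∫⁻ w in B, q w ^ n ∂μ).toReal := by
    intro B hB
    set C : Set ((Fin n → Z) × W) :=
      (Prod.snd ⁻¹' B) ∩ ⋂ i : Fin n, {p : (Fin n → Z) × W | L p.2 (p.1 i) = 0} with hCdef
    have hC : MeasurableSet C := by
      apply (measurable_snd hB).inter
      apply MeasurableSet.iInter
      intro i
      have : Measurable fun p : (Fin n → Z) × W => L p.2 (p.1 i) :=
        hLmeas.comp (measurable_snd.prodMk ((measurable_pi_apply i).comp measurable_fst))
      exact this (measurableSet_singleton 0)
    have hslice : ∀ S, Prod.mk S ⁻¹' C = {w | w ∈ B ∧ ∀ i, L w (S i) = 0} := by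
      intro S; ext w; simp [hCdef]
    have h1 : ∫ S, (μ {w | w ∈ B ∧ ∀ i, L w (S i) = 0}).toReal ∂ν
        = (∫⁻ S, μ (Prod.mk S ⁻¹' C) ∂ν).toReal := by
      rw [← integral_toReal ((measurable_measure_prodMk_left hC).aemeasurable)
        (Filter.Eventually.of_forall fun S => measure_lt_top μ _)]
      exact integral_congr_ae (Filter.Eventually.of_forall fun S => by
        show (μ {w | w ∈ B ∧ ∀ i, L w (S i) = 0}).toReal = (μ (Prod.mk S ⁻¹' C)).toReal
        rw [hslice S])
    have h2 : ∫⁻ S, μ (Prod.mk S ⁻¹' C) ∂ν = (ν.prod μ) C := (Measure.prod_apply hC).symm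
    have h3 : (ν.prod μ) C = ∫⁻ w, ν ((fun S => (S, w)) ⁻¹' C) ∂μ :=
      Measure.prod_apply_symm hC
    have h4 : ∀ w, ν ((fun S => (S, w)) ⁻¹' C) = B.indicator (fun w => q w ^ n) w := by
      intro w
      by_cases hw : w ∈ B
      · have hset : ((fun S => (S, w)) ⁻¹' C)
            = Set.pi Set.univ (fun _ : Fin n => {z | L w z = 0}) := by
          ext S; simp [hCdef, hw, Set.mem_pi]
        rw [hset, hνdef, Measure.pi_pi, Set.indicator_of_mem hw]
        simp [hqdef, Finset.prod_const]
      · have hset : ((fun S => (S, w)) ⁻¹' C) = ∅ := by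
          ext S; simp [hCdef, hw]
        rw [hset, Set.indicator_of_notMem hw]; simp
    rw [h1, h2, h3]
    congr 1
    calc ∫⁻ w, ν ((fun S => (S, w)) ⁻¹' C) ∂μ
        = ∫⁻ w, B.indicator (fun w => q w ^ n) w ∂μ := lintegral_congr h4
      _ = ∫⁻ w in B, q w ^ n ∂μ := lintegral_indicator hB _
  -- apply to ωε and ω
  have hBε : MeasurableSet {w | Emin + ε ≤ E w} := measurableSet_le measurable_const hEmeas
  have hB' : MeasurableSet {w | E w < Emin + ε / 2} := measurableSet_lt hEmeas measurable_const
  have hωε_eq : ∫ S, ωε S ∂ν = (∫⁻ w in {w | Emin + ε ≤ E w}, q w ^ n ∂μ).toReal := by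
    rw [← key _ hBε]
    exact integral_congr_ae (Filter.Eventually.of_forall fun S => by
      show ωε S = (μ {w | w ∈ {w | Emin + ε ≤ E w} ∧ ∀ i, L w (S i) = 0}).toReal
      rw [hωεdef S]; rfl)
  have hω_eq : ∫ S, ω S ∂ν = (∫⁻ w, q w ^ n ∂μ).toReal := by
    have := key Set.univ MeasurableSet.univ
    rw [Measure.restrict_univ] at this
    rw [← this]
    exact integral_congr_ae (Filter.Eventually.of_forall fun S => by
      show ω S = (μ {w | w ∈ Set.univ ∧ ∀ i, L w (S i) = 0}).toReal
      rw [hωdef S]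
      congr 2
      ext w; simp)
  -- numeric constants
  set c₀ : ℝ := 1 - (Emin + ε) with hc₀
  set d₀ : ℝ := 1 - (Emin + ε / 2) with hd₀
  have hc₀pos : 0 < c₀ := by rw [hc₀]; linarith
  have hd₀pos : 0 < d₀ := by rw [hd₀]; linarith
  have hd₀le1 : d₀ ≤ 1 := by rw [hd₀]; linarith
  -- bounds on the lintegrals
  have ha : ∫⁻ w in {w | Emin + ε ≤ E w}, q w ^ n ∂μ
      ≤ (ENNReal.ofReal c₀) ^ n * μ Set.univ := by
    calc ∫⁻ w in {w | Emin + ε ≤ E w}, q w ^ n ∂μ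
        ≤ ∫⁻ _ in {w | Emin + ε ≤ E w}, (ENNReal.ofReal c₀) ^ n ∂μ := by
          apply setLIntegral_mono measurable_const
          intro w hw
          apply pow_le_pow_left'
          rw [hqE w]
          exact ENNReal.ofReal_le_ofReal (by simp only [Set.mem_setOf_eq] at hw; rw [hc₀]; linarith)
      _ = (ENNReal.ofReal c₀) ^ n * μ {w | Emin + ε ≤ E w} := setLIntegral_const _ _
      _ ≤ (ENNReal.ofReal c₀) ^ n * μ Set.univ :=
          mul_le_mul_right (measure_mono (Set.subset_univ _)) _
  have hb : (ENNReal.ofReal d₀) ^ n * μ {w | E w < Emin + ε / 2}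
      ≤ ∫⁻ w, q w ^ n ∂μ := by
    calc (ENNReal.ofReal d₀) ^ n * μ {w | E w < Emin + ε / 2}
        = ∫⁻ _ in {w | E w < Emin + ε / 2}, (ENNReal.ofReal d₀) ^ n ∂μ :=
          (setLIntegral_const _ _).symm
      _ ≤ ∫⁻ w in {w | E w < Emin + ε / 2}, q w ^ n ∂μ := by
          apply setLIntegral_mono (hqmeas.pow_const n)
          intro w hw
          apply pow_le_pow_left'
          rw [hqE w]
          exact ENNReal.ofReal_le_ofReal (by simp only [Set.mem_setOf_eq] at hw; rw [hd₀]; linarith)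
      _ ≤ ∫⁻ w, q w ^ n ∂μ := setLIntegral_le_lintegral _ _
  -- finiteness
  have hqle1 : ∀ w, q w ^ n ≤ 1 := fun w => pow_le_one' (prob_le_one) n
  have hbfin : ∫⁻ w, q w ^ n ∂μ ≠ ⊤ := by
    have : ∫⁻ w, q w ^ n ∂μ ≤ ∫⁻ _, 1 ∂μ := lintegral_mono hqle1
    rw [lintegral_one] at this
    exact (this.trans_lt (measure_lt_top μ _)).ne
  have hafin : ∫⁻ w in {w | Emin + ε ≤ E w}, q w ^ n ∂μ ≠ ⊤ :=
    ((setLIntegral_le_lintegral _ _).trans_lt hbfin.lt_top).ne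
  -- real-valued bounds
  set Ω : ℝ := (μ Set.univ).toReal with hΩdef
  have hΩpos : 0 < Ω := ENNReal.toReal_pos hΩ.ne' (measure_ne_top μ _)
  have hA : (∫⁻ w in {w | Emin + ε ≤ E w}, q w ^ n ∂μ).toReal ≤ c₀ ^ n * Ω := by
    have := ENNReal.toReal_mono (by
        exact ENNReal.mul_ne_top (by simp [ENNReal.pow_ne_top]) (measure_ne_top μ _)) ha
    rwa [ENNReal.toReal_mul, ENNReal.toReal_pow, ENNReal.toReal_ofReal hc₀pos.le] at this
  have hμB' : (μ {w | E w < Emin + ε / 2}).toReal = g * Ω := by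
    rw [hgdef, div_mul_cancel₀ _ hΩpos.ne']
  have hB : d₀ ^ n * (g * Ω) ≤ (∫⁻ w, q w ^ n ∂μ).toReal := by
    have := ENNReal.toReal_mono hbfin hb
    rwa [ENNReal.toReal_mul, ENNReal.toReal_pow, ENNReal.toReal_ofReal hd₀pos.le, hμB'] at this
  have hBpos : 0 < (∫⁻ w, q w ^ n ∂μ).toReal :=
    lt_of_lt_of_le (by positivity) hB
  -- integral of ω is positive
  have hIωpos : 0 < ∫ S, ω S ∂ν := by rw [hω_eq]; exact hBpos
  -- φ S * ω S = ωε S a.e.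
  have hφω : ∫ S, φ S * ω S ∂ν = ∫ S, ωε S ∂ν := by
    apply integral_congr_ae
    filter_upwards [hωpos] with S hS
    rw [hφdef S, div_mul_cancel₀ _ hS.ne']
  have hφle : ∫ S, φ S ∂ν ≤ (∫ S, ωε S ∂ν) / (∫ S, ω S ∂ν) := by
    rw [le_div_iff₀ hIωpos]
    have := hcorr
    rw [hφω] at this
    linarith
  -- Markov
  have hφnonneg : ∀ S, 0 ≤ φ S := fun S => by
    rw [hφdef S, hωεdef S, hωdef S]
    exact div_nonneg ENNReal.toReal_nonneg ENNReal.toReal_nonneg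
  have hmarkov : γ * (ν {S | γ ≤ φ S}).toReal ≤ ∫ S, φ S ∂ν :=
    mul_meas_ge_le_integral_of_nonneg (Filter.Eventually.of_forall hφnonneg) hφint γ
  constructor
  · -- first inequality
    have h1 : (ν {S | γ ≤ φ S}).toReal ≤ (1 / γ) * ∫ S, φ S ∂ν := by
      calc (ν {S | γ ≤ φ S}).toReal = (1 / γ) * (γ * (ν {S | γ ≤ φ S}).toReal) := by
            field_simp
        _ ≤ (1 / γ) * ∫ S, φ S ∂ν := mul_le_mul_of_nonneg_left hmarkov (by positivity)
    have h2 : (1 / γ) * ∫ S, φ S ∂ν ≤ (1 / γ) * ((∫ S, ωε S ∂ν) / (∫ S, ω S ∂ν)) :=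
      mul_le_mul_of_nonneg_left hφle (by positivity)
    exact h1.trans h2
  · -- second inequality
    have hexp : c₀ / d₀ ≤ Real.exp (-(ε / 2)) := by
      have h1 : c₀ / d₀ = 1 - (ε / 2) / d₀ := by
        rw [eq_sub_iff_add_eq, ← add_div,
          show c₀ + ε / 2 = d₀ by rw [hc₀, hd₀]; ring]
        exact div_self hd₀pos.ne'
      have h2 : ε / 2 ≤ (ε / 2) / d₀ := by
        rw [le_div_iff₀ hd₀pos]
        nlinarith
      have h3 : -(ε / 2) + 1 ≤ Real.exp (-(ε / 2)) := Real.add_one_le_exp _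
      linarith
    have hratio : (∫ S, ωε S ∂ν) / (∫ S, ω S ∂ν) ≤ (1 / g) * Real.exp (-(ε / 2) * n) := by
      rw [hωε_eq, hω_eq]
      calc (∫⁻ w in {w | Emin + ε ≤ E w}, q w ^ n ∂μ).toReal / (∫⁻ w, q w ^ n ∂μ).toReal
          ≤ (c₀ ^ n * Ω) / (d₀ ^ n * (g * Ω)) := by
            apply div_le_div₀ (by positivity) hA (by positivity) hB
        _ = (c₀ / d₀) ^ n * (1 / g) := by
            have h1 : d₀ ≠ 0 := hd₀pos.ne'
            have h2 : g ≠ 0 := hgpos.ne'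
            have h3 : Ω ≠ 0 := hΩpos.ne'
            have h4 : (d₀ : ℝ) ^ n ≠ 0 := pow_ne_zero n h1
            rw [div_pow]
            field_simp
        _ ≤ Real.exp (-(ε / 2)) ^ n * (1 / g) := by
            apply mul_le_mul_of_nonneg_right _ (by positivity)
            exact pow_le_pow_left₀ (by positivity) hexp n
        _ = (1 / g) * Real.exp (-(ε / 2) * n) := by
            rw [mul_comm]
            congr 1
            rw [show -(ε / 2) * (n : ℝ) = (n : ℝ) * (-(ε / 2)) by ring, Real.exp_nat_mul]
    calc (1 / γ) * ((∫ S, ωε S ∂ν) / (∫ S, ω S ∂ν))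
        ≤ (1 / γ) * ((1 / g) * Real.exp (-(ε / 2) * n)) :=
          mul_le_mul_of_nonneg_left hratio (by positivity)
      _ = (1 / (γ * g)) * Real.exp (-(ε / 2) * n) := by
          rw [← mul_assoc, one_div, one_div, one_div, ← mul_inv]
end

section
/- (Interval version of Corollary 2) Fix n ∈ ℕ and 0 ≤ ε < ε' ≤ 1 − E_min, and define ω_{ε<ε'}(S) := ω_ε(S) − ω_{ε'}(S) and φ_{ε<ε'}(S) := ω_{ε<ε'}(S)/ω(S). Assume ω(S) > 0 for P^n-almost every S, that all the quantities involved are P^n-integrable, that ∫_W (1 − E(w))^n dμ(w) > 0, and that ⟨φ_{ε<ε'}·ω⟩_S − ⟨φ_{ε<ε'}⟩_S·⟨ω⟩_S ≥ 0 (no negative correlation). Then ⟨φ_{ε<ε'}(S)⟩_S ≤ ∫_{{w : E_min+ε ≤ E(w) < E_min+ε'}} (1 − E(w))^n dμ(w) / ∫_W (1 − E(w))^n dμ(w). -/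
open MeasureTheory

section Aux

variable {W Z : Type*} [MeasurableSpace W] [MeasurableSpace Z]

lemma key_fubini (μ : Measure W) [IsFiniteMeasure μ]
    (P : Measure Z) [IsProbabilityMeasure P]
    (L : W → Z → ℝ) (hLmeas : Measurable (Function.uncurry L))
    (hL01 : ∀ w z, L w z = 0 ∨ L w z = 1)
    (E : W → ℝ) (hE : ∀ w, E w = ∫ z, L w z ∂P)
    (n : ℕ) (A : Set W) (hA : MeasurableSet A) :
    ∫ S, (μ {w | w ∈ A ∧ ∀ i, L w (S i) = 0}).toReal
        ∂(Measure.pi fun _ : Fin n => P)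
      = ∫ w in A, (1 - E w) ^ n ∂μ := by
  set ν : Measure (Fin n → Z) := Measure.pi fun _ : Fin n => P with hν
  -- measurability facts
  have hLw : ∀ w, Measurable (L w) := fun w => hLmeas.of_uncurry_left
  have hm1 : ∀ w, MeasurableSet {z | L w z = 1} := fun w =>
    (hLw w) (measurableSet_singleton 1)
  have hE1 : ∀ w, E w = (P {z | L w z = 1}).toReal := by
    intro w
    show _ = P.real _
    rw [hE w, ← integral_indicator_one (hm1 w)]
    refine integral_congr_ae (Filter.Eventually.of_forall fun z => ?_)
    rcases hL01 w z with h | h <;>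
      simp [h, Set.indicator_apply, Set.mem_setOf_eq]
  have hcompl : ∀ w, {z | L w z = 0} = {z | L w z = 1}ᶜ := by
    intro w
    ext z
    rcases hL01 w z with h | h <;> simp [h]
  have hP0 : ∀ w, (P {z | L w z = 0}).toReal = 1 - E w := by
    intro w
    rw [hcompl w, prob_compl_eq_one_sub (hm1 w), hE1 w,
      ENNReal.toReal_sub_of_le prob_le_one ENNReal.one_ne_top, ENNReal.toReal_one]
  -- the product measurable set
  set s : Set ((Fin n → Z) × W) := {p | p.2 ∈ A ∧ ∀ i, L p.2 (p.1 i) = 0} with hsdef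
  have hs : MeasurableSet s := by
    have h2 : s = (Prod.snd ⁻¹' A)
        ∩ ⋂ i, {p : (Fin n → Z) × W | L p.2 (p.1 i) = 0} := by
      ext p; simp [hsdef]
    rw [h2]
    refine (hA.preimage measurable_snd).inter (MeasurableSet.iInter fun i => ?_)
    exact (hLmeas.comp (measurable_snd.prodMk
      ((measurable_pi_apply i).comp measurable_fst))) (measurableSet_singleton 0)
  -- ν of the slice
  have hslice : ∀ w, ν {S : Fin n → Z | ∀ i, L w (S i) = 0}
      = (P {z | L w z = 0}) ^ n := by
    intro w
    have : {S : Fin n → Z | ∀ i, L w (S i) = 0}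
        = Set.pi Set.univ fun _ : Fin n => {z | L w z = 0} := by
      ext S; simp [Set.mem_pi]
    rw [this, hν, Measure.pi_pi]
    simp
  -- LHS as a lintegral
  have hLHS : ∫ S, (μ {w | w ∈ A ∧ ∀ i, L w (S i) = 0}).toReal ∂ν
      = ((ν.prod μ) s).toReal := by
    have h1 : ∀ S, {w | w ∈ A ∧ ∀ i, L w (S i) = 0} = Prod.mk S ⁻¹' s := by
      intro S; rfl
    calc ∫ S, (μ {w | w ∈ A ∧ ∀ i, L w (S i) = 0}).toReal ∂ν
        = ∫ S, (μ (Prod.mk S ⁻¹' s)).toReal ∂ν := by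
          simp_rw [h1]
      _ = (∫⁻ S, μ (Prod.mk S ⁻¹' s) ∂ν).toReal := by
          refine integral_toReal (measurable_measure_prodMk_left hs).aemeasurable ?_
          exact Filter.Eventually.of_forall fun S => measure_lt_top μ _
      _ = ((ν.prod μ) s).toReal := by rw [Measure.prod_apply hs]
  -- compute the product measure by the other order
  have hprod : (ν.prod μ) s = ∫⁻ w in A, (P {z | L w z = 0}) ^ n ∂μ := by
    rw [Measure.prod_apply_symm hs]
    have : ∀ w, ν ((fun S => (S, w)) ⁻¹' s)
        = A.indicator (fun w => (P {z | L w z = 0}) ^ n) w := by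
      intro w
      by_cases hw : w ∈ A
      · have : (fun S => (S, w)) ⁻¹' s = {S : Fin n → Z | ∀ i, L w (S i) = 0} := by
          ext S; simp [hsdef, hw]
        rw [this, hslice w, Set.indicator_of_mem hw]
      · have : (fun S => (S, w)) ⁻¹' s = ∅ := by
          ext S; simp [hsdef, hw]
        rw [this, measure_empty, Set.indicator_of_notMem hw]
    simp_rw [this]
    rw [lintegral_indicator hA]
  -- measurability of w ↦ P {z | L w z = 0}
  have hPmeas : Measurable fun w => P {z | L w z = 0} := by
    have hu : MeasurableSet {p : W × Z | L p.1 p.2 = 0} :=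
      hLmeas (measurableSet_singleton 0)
    have := measurable_measure_prodMk_left (ν := P) hu
    exact this
  -- RHS as the same lintegral
  have hRHS : ∫ w in A, (1 - E w) ^ n ∂μ
      = (∫⁻ w in A, (P {z | L w z = 0}) ^ n ∂μ).toReal := by
    have h2 : ∀ w, (1 - E w) ^ n = (((P {z | L w z = 0}) ^ n).toReal) := by
      intro w
      rw [ENNReal.toReal_pow, hP0 w]
    calc ∫ w in A, (1 - E w) ^ n ∂μ
        = ∫ w in A, (((P {z | L w z = 0}) ^ n).toReal) ∂μ := by simp_rw [h2]
      _ = (∫⁻ w in A, (P {z | L w z = 0}) ^ n ∂μ).toReal := by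
          refine integral_toReal ((hPmeas.pow_const n).aemeasurable) ?_
          refine Filter.Eventually.of_forall fun w => ?_
          exact ENNReal.pow_lt_top (measure_lt_top P _)
  rw [hLHS, hRHS, hprod]

end Aux

/-- Interval version of Corollary 2:
`⟨φ_{ε<ε'}(S)⟩ ≤ ∫_{E_min+ε ≤ E < E_min+ε'} (1-E)^n dμ / ∫_W (1-E)^n dμ`. -/
theorem corollary2_interval_version
    {W Z : Type*} [MeasurableSpace W] [MeasurableSpace Z]
    (μ : Measure W) [IsFiniteMeasure μ] (hΩ : 0 < μ Set.univ)
    (P : Measure Z) [IsProbabilityMeasure P]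
    (L : W → Z → ℝ) (hLmeas : Measurable (Function.uncurry L))
    (hL01 : ∀ w z, L w z = 0 ∨ L w z = 1)
    (E : W → ℝ) (hE : ∀ w, E w = ∫ z, L w z ∂P)
    (Emin : ℝ) (hEmin0 : 0 ≤ Emin) (hEmin1 : Emin ≤ 1)
    (hEmin : ∀ w, Emin ≤ E w)
    (n : ℕ) (ε ε' : ℝ) (hε0 : 0 ≤ ε) (hεε' : ε < ε') (hε'1 : ε' ≤ 1 - Emin)
    (ω ωε ωε' ωI φI : (Fin n → Z) → ℝ)
    (hωdef : ∀ S, ω S = (μ {w | ∀ i, L w (S i) = 0}).toReal)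
    (hωεdef : ∀ S, ωε S = (μ {w | Emin + ε ≤ E w ∧ ∀ i, L w (S i) = 0}).toReal)
    (hωε'def : ∀ S,
      ωε' S = (μ {w | Emin + ε' ≤ E w ∧ ∀ i, L w (S i) = 0}).toReal)
    (hωIdef : ∀ S, ωI S = ωε S - ωε' S)
    (hφIdef : ∀ S, φI S = ωI S / ω S)
    (hωpos : ∀ᵐ S ∂(Measure.pi fun _ : Fin n => P), 0 < ω S)
    (hωint : Integrable ω (Measure.pi fun _ : Fin n => P))
    (hωεint : Integrable ωε (Measure.pi fun _ : Fin n => P))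
    (hωε'int : Integrable ωε' (Measure.pi fun _ : Fin n => P))
    (hωIint : Integrable ωI (Measure.pi fun _ : Fin n => P))
    (hφIint : Integrable φI (Measure.pi fun _ : Fin n => P))
    (hden : 0 < ∫ w, (1 - E w) ^ n ∂μ)
    (hcorr : 0 ≤ ∫ S, φI S * ω S ∂(Measure.pi fun _ : Fin n => P)
        - (∫ S, φI S ∂(Measure.pi fun _ : Fin n => P))
          * (∫ S, ω S ∂(Measure.pi fun _ : Fin n => P))) :
    ∫ S, φI S ∂(Measure.pi fun _ : Fin n => P)
      ≤ (∫ w in {w | Emin + ε ≤ E w ∧ E w < Emin + ε'}, (1 - E w) ^ n ∂μ)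
          / (∫ w, (1 - E w) ^ n ∂μ) := by
  set ν : Measure (Fin n → Z) := Measure.pi fun _ : Fin n => P with hν
  -- measurability of E
  have hEmeas : Measurable E := by
    have h1 : StronglyMeasurable fun w => ∫ z, L w z ∂P :=
      hLmeas.stronglyMeasurable.integral_prod_right'
    have : E = fun w => ∫ z, L w z ∂P := funext hE
    rw [this]
    exact h1.measurable
  have hAε : MeasurableSet {w | Emin + ε ≤ E w} :=
    measurableSet_le measurable_const hEmeas
  have hAε' : MeasurableSet {w | Emin + ε' ≤ E w} :=
    measurableSet_le measurable_const hEmeas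
  -- E w ≤ 1, so the integrand is bounded
  have hEle1 : ∀ w, E w ≤ 1 := by
    intro w
    rw [hE w]
    have hint : Integrable (L w) P := by
      refine (integrable_const (1 : ℝ)).mono'
        hLmeas.of_uncurry_left.aestronglyMeasurable ?_
      refine Filter.Eventually.of_forall fun z => ?_
      rcases hL01 w z with h | h <;> simp [h]
    calc ∫ z, L w z ∂P ≤ ∫ _ : Z, (1 : ℝ) ∂P := by
          refine integral_mono hint (integrable_const 1) fun z => ?_
          rcases hL01 w z with h | h <;> simp [h]
      _ = 1 := by simp
  have hE0 : ∀ w, 0 ≤ E w := fun w => le_trans hEmin0 (hEmin w)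
  -- integrability of (1-E)^n
  have hfint : Integrable (fun w => (1 - E w) ^ n) μ := by
    refine (integrable_const (1 : ℝ)).mono'
      ((hEmeas.const_sub 1).pow_const n).aestronglyMeasurable ?_
    refine Filter.Eventually.of_forall fun w => ?_
    rw [Real.norm_eq_abs, abs_pow]
    refine pow_le_one₀ (abs_nonneg _) ?_
    rw [abs_le]
    constructor <;> nlinarith [hE0 w, hEle1 w]
  -- compute the three averages via the key lemma
  have hωavg : ∫ S, ω S ∂ν = ∫ w, (1 - E w) ^ n ∂μ := by
    have := key_fubini μ P L hLmeas hL01 E hE n Set.univ MeasurableSet.univ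
    rw [setIntegral_univ] at this
    rw [← this]
    refine integral_congr_ae (Filter.Eventually.of_forall fun S => ?_)
    rw [hωdef S]
    have h3 : {w | ∀ i, L w (S i) = 0}
        = {w | w ∈ Set.univ ∧ ∀ i, L w (S i) = 0} := by ext w; simp
    rw [h3]
  have hωεavg : ∫ S, ωε S ∂ν = ∫ w in {w | Emin + ε ≤ E w}, (1 - E w) ^ n ∂μ := by
    have := key_fubini μ P L hLmeas hL01 E hE n _ hAε
    rw [← this]
    exact integral_congr_ae (Filter.Eventually.of_forall fun S => hωεdef S)
  have hωε'avg : ∫ S, ωε' S ∂ν = ∫ w in {w | Emin + ε' ≤ E w}, (1 - E w) ^ n ∂μ := by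
    have := key_fubini μ P L hLmeas hL01 E hE n _ hAε'
    rw [← this]
    exact integral_congr_ae (Filter.Eventually.of_forall fun S => hωε'def S)
  -- the numerator
  have hsub : {w | Emin + ε' ≤ E w} ⊆ {w | Emin + ε ≤ E w} := by
    intro w hw
    simp only [Set.mem_setOf_eq] at *
    linarith
  have hdiffset : {w | Emin + ε ≤ E w} \ {w | Emin + ε' ≤ E w}
      = {w | Emin + ε ≤ E w ∧ E w < Emin + ε'} := by
    ext w; simp [not_le]
  have hωIavg : ∫ S, ωI S ∂ν
      = ∫ w in {w | Emin + ε ≤ E w ∧ E w < Emin + ε'}, (1 - E w) ^ n ∂μ := by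
    have h1 : ∫ S, ωI S ∂ν = ∫ S, ωε S ∂ν - ∫ S, ωε' S ∂ν := by
      rw [show ωI = fun S => ωε S - ωε' S from funext hωIdef]
      exact integral_sub hωεint hωε'int
    rw [h1, hωεavg, hωε'avg, ← hdiffset]
    rw [integral_diff hAε' hfint.integrableOn hsub]
  -- φI * ω = ωI a.e.
  have hφω : ∫ S, φI S * ω S ∂ν = ∫ S, ωI S ∂ν := by
    refine integral_congr_ae ?_
    filter_upwards [hωpos] with S hS
    rw [hφIdef S, div_mul_cancel₀ _ (ne_of_gt hS)]
  rw [hφω, hωIavg] at hcorr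
  rw [le_div_iff₀ hden]
  calc (∫ S, φI S ∂ν) * ∫ w, (1 - E w) ^ n ∂μ
      = (∫ S, φI S ∂ν) * ∫ S, ω S ∂ν := by rw [hωavg]
    _ ≤ ∫ w in {w | Emin + ε ≤ E w ∧ E w < Emin + ε'}, (1 - E w) ^ n ∂μ := by
        linarith
end

section
/- (Mean true error bound, inequality (14)) Fix n ∈ ℕ. Assume ω(S) > 0 for P^n-almost every S, that ∫_W (1 − E(w))^n dμ(w) > 0, that all the quantities involved are P^n-integrable, and that for every ε with 0 ≤ ε ≤ 1 − E_min the fraction φ_ε(S) and the volume ω(S) do not correlate negatively, i.e. ⟨φ_ε·ω⟩_S − ⟨φ_ε⟩_S·⟨ω⟩_S ≥ 0. Define the mean true error over the global minima of S as E_S := (1/ω(S)) · ∫_{{w ∈ W : L(w,z_i)=0 for all i}} E(w) dμ(w), and E_n := ⟨E_S⟩_S. Then E_n ≤ ∫_W E(w)·(1 − E(w))^n dμ(w) / ∫_W (1 − E(w))^n dμ(w). -/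
open MeasureTheory

private lemma integrable_of_bdd' {α : Type*} [MeasurableSpace α] {m : Measure α}
    [IsFiniteMeasure m] {f : α → ℝ} (hf : AEStronglyMeasurable f m) {C : ℝ}
    (h : ∀ x, |f x| ≤ C) : Integrable f m :=
  (integrable_const C).mono' hf (Filter.Eventually.of_forall fun x => by
    simpa [Real.norm_eq_abs] using h x)

private lemma integral_Ioc_ite {a b c : ℝ} (h0 : 0 ≤ a) (h1 : a ≤ b) :
    ∫ ε in Set.Ioc (0:ℝ) b, (if ε ≤ a then c else 0) ∂volume = a * c := by
  have hrw : (fun ε : ℝ => if ε ≤ a then c else 0)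
      = Set.indicator (Set.Iic a) (fun _ => c) := by
    funext ε; simp [Set.indicator_apply, Set.mem_Iic]
  rw [hrw, setIntegral_indicator measurableSet_Iic, Set.Ioc_inter_Iic,
    min_eq_right h1, setIntegral_const, Real.volume_real_Ioc_of_le h0, smul_eq_mul, sub_zero]

/-- Mean true error bound, inequality (14):
`E_n ≤ ∫_W E(w)(1-E(w))^n dμ / ∫_W (1-E(w))^n dμ`. -/
theorem mean_true_error_bound
    {W Z : Type*} [MeasurableSpace W] [MeasurableSpace Z]
    (μ : Measure W) [IsFiniteMeasure μ] (hΩ : 0 < μ Set.univ)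
    (P : Measure Z) [IsProbabilityMeasure P]
    (L : W → Z → ℝ) (hLmeas : Measurable (Function.uncurry L))
    (hL01 : ∀ w z, L w z = 0 ∨ L w z = 1)
    (E : W → ℝ) (hE : ∀ w, E w = ∫ z, L w z ∂P)
    (Emin : ℝ) (hEmin0 : 0 ≤ Emin) (hEmin1 : Emin ≤ 1)
    (hEmin : ∀ w, Emin ≤ E w)
    (n : ℕ)
    (ω : (Fin n → Z) → ℝ) (ωε φε : ℝ → (Fin n → Z) → ℝ)
    (ES : (Fin n → Z) → ℝ)
    (hωdef : ∀ S, ω S = (μ {w | ∀ i, L w (S i) = 0}).toReal)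
    (hωεdef : ∀ ε S,
      ωε ε S = (μ {w | Emin + ε ≤ E w ∧ ∀ i, L w (S i) = 0}).toReal)
    (hφεdef : ∀ ε S, φε ε S = ωε ε S / ω S)
    (hESdef : ∀ S,
      ES S = (1 / ω S) * ∫ w in {w | ∀ i, L w (S i) = 0}, E w ∂μ)
    (hωpos : ∀ᵐ S ∂(Measure.pi fun _ : Fin n => P), 0 < ω S)
    (hden : 0 < ∫ w, (1 - E w) ^ n ∂μ)
    (hωint : Integrable ω (Measure.pi fun _ : Fin n => P))
    (hωεint : ∀ ε, 0 ≤ ε → ε ≤ 1 - Emin →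
      Integrable (ωε ε) (Measure.pi fun _ : Fin n => P))
    (hφεint : ∀ ε, 0 ≤ ε → ε ≤ 1 - Emin →
      Integrable (φε ε) (Measure.pi fun _ : Fin n => P))
    (hESint : Integrable ES (Measure.pi fun _ : Fin n => P))
    (hcorr : ∀ ε, 0 ≤ ε → ε ≤ 1 - Emin →
      0 ≤ ∫ S, φε ε S * ω S ∂(Measure.pi fun _ : Fin n => P)
        - (∫ S, φε ε S ∂(Measure.pi fun _ : Fin n => P))
          * (∫ S, ω S ∂(Measure.pi fun _ : Fin n => P))) :
    ∫ S, ES S ∂(Measure.pi fun _ : Fin n => P)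
      ≤ (∫ w, E w * (1 - E w) ^ n ∂μ) / (∫ w, (1 - E w) ^ n ∂μ) := by
  classical
  set ν : Measure (Fin n → Z) := Measure.pi fun _ : Fin n => P with hνdef
  haveI hνprob : IsProbabilityMeasure ν := by rw [hνdef]; infer_instance
  set I : Set ℝ := Set.Ioc (0:ℝ) (1 - Emin) with hIdef
  haveI hfinI : IsFiniteMeasure (volume.restrict I) :=
    ⟨by rw [Measure.restrict_apply_univ]; exact measure_Ioc_lt_top⟩
  -- basic facts about L and E
  have mE : Measurable E := by
    have : E = fun w => ∫ z, Function.uncurry L (w, z) ∂P := funext fun w => hE w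
    rw [this]
    exact hLmeas.stronglyMeasurable.integral_prod_right'.measurable
  have mLw : ∀ w, Measurable fun z => L w z := fun w =>
    hLmeas.comp measurable_prodMk_left
  have hL0 : ∀ w z, 0 ≤ L w z := fun w z => by rcases hL01 w z with h | h <;> simp [h]
  have hL1 : ∀ w z, L w z ≤ 1 := fun w z => by rcases hL01 w z with h | h <;> simp [h]
  have hLint : ∀ w, Integrable (fun z => L w z) P := fun w =>
    integrable_of_bdd' (mLw w).aestronglyMeasurable (C := 1) fun z =>
      abs_le.mpr ⟨by linarith [hL0 w z], hL1 w z⟩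
  have hE0 : ∀ w, 0 ≤ E w := fun w => by
    rw [hE]; exact integral_nonneg (hL0 w)
  have hE1 : ∀ w, E w ≤ 1 := fun w => by
    rw [hE]
    calc ∫ z, L w z ∂P ≤ ∫ _, (1:ℝ) ∂P :=
          integral_mono (hLint w) (integrable_const 1) (hL1 w)
      _ = 1 := by simp
  have mq : Measurable fun w => (1 - E w) ^ n := (measurable_const.sub mE).pow_const n
  have hq0 : ∀ w, 0 ≤ (1 - E w) ^ n := fun w => pow_nonneg (by linarith [hE1 w]) n
  have hq1 : ∀ w, (1 - E w) ^ n ≤ 1 := fun w =>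
    pow_le_one₀ (by linarith [hE1 w]) (by linarith [hE0 w])
  have hq_int : Integrable (fun w => (1 - E w) ^ n) μ :=
    integrable_of_bdd' mq.aestronglyMeasurable (C := 1) fun w =>
      abs_le.mpr ⟨by linarith [hq0 w], hq1 w⟩
  -- probability that a single sample is a zero of w
  have hPB : ∀ w, P {z | L w z = 0} = ENNReal.ofReal (1 - E w) := by
    intro w
    have h1set : MeasurableSet {z | L w z = 1} := (mLw w) (measurableSet_singleton 1)
    have hEw : E w = (P {z | L w z = 1}).toReal := by
      rw [hE]
      have hind : (fun z => L w z) = Set.indicator {z | L w z = 1} (1 : Z → ℝ) := by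
        funext z; rcases hL01 w z with h | h <;>
          simp [Set.indicator_apply, Set.mem_setOf_eq, h]
      rw [hind, integral_indicator_one h1set]; rfl
    have hcompl : {z | L w z = 0} = {z | L w z = 1}ᶜ := by
      ext z; rcases hL01 w z with h | h <;> simp [h]
    rw [hcompl, measure_compl h1set (measure_ne_top _ _), measure_univ, hEw,
      ENNReal.ofReal_sub _ ENNReal.toReal_nonneg, ENNReal.ofReal_one,
      ENNReal.ofReal_toReal (measure_ne_top _ _)]
  -- probability that all n samples are zeros of w
  have hνA : ∀ w, ν {S | ∀ i, L w (S i) = 0} = (ENNReal.ofReal (1 - E w)) ^ n := by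
    intro w
    have hset : {S : Fin n → Z | ∀ i, L w (S i) = 0}
        = Set.pi Set.univ fun _ => {z | L w z = 0} := by
      ext S; simp [Set.mem_pi]
    rw [hset, hνdef, Measure.pi_pi]
    simp [hPB w]
  have hνA' : ∀ w, (ν {S | ∀ i, L w (S i) = 0}).toReal = (1 - E w) ^ n := fun w => by
    rw [hνA w, ENNReal.toReal_pow, ENNReal.toReal_ofReal (by linarith [hE1 w])]
  -- measurable sets
  have hA2 : MeasurableSet {p : (Fin n → Z) × W | ∀ i, L p.2 (p.1 i) = 0} := by
    have hset : {p : (Fin n → Z) × W | ∀ i, L p.2 (p.1 i) = 0}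
        = ⋂ i, (fun p : (Fin n → Z) × W => L p.2 (p.1 i)) ⁻¹' {0} := by
      ext p; simp
    rw [hset]
    exact MeasurableSet.iInter fun i =>
      (hLmeas.comp (measurable_snd.prodMk
        ((measurable_pi_apply i).comp measurable_fst))) (measurableSet_singleton 0)
  have hΩS : ∀ S : Fin n → Z, MeasurableSet {w | ∀ i, L w (S i) = 0} := by
    intro S
    have hset : {w | ∀ i, L w (S i) = 0} = ⋂ i, (fun w => L w (S i)) ⁻¹' {0} := by
      ext w; simp
    rw [hset]
    exact MeasurableSet.iInter fun i =>
      (hLmeas.comp (measurable_id.prodMk measurable_const)) (measurableSet_singleton 0)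
  have hTε : ∀ ε : ℝ,
      MeasurableSet {p : (Fin n → Z) × W | Emin + ε ≤ E p.2 ∧ ∀ i, L p.2 (p.1 i) = 0} :=
    fun ε => (measurableSet_le measurable_const (mE.comp measurable_snd)).inter hA2
  have hEset : ∀ ε : ℝ, MeasurableSet {w | Emin + ε ≤ E w} := fun ε =>
    measurableSet_le measurable_const mE
  -- measurability of ω
  have hωmeas : Measurable ω := by
    have hrw : ω = fun S =>
        (μ (Prod.mk S ⁻¹' {p : (Fin n → Z) × W | ∀ i, L p.2 (p.1 i) = 0})).toReal :=
      funext fun S => hωdef S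
    rw [hrw]
    exact (measurable_measure_prodMk_left hA2).ennreal_toReal
  -- C1 : mean of ω
  have hC1 : ∫ S, ω S ∂ν = ∫ w, (1 - E w) ^ n ∂μ := by
    have hswap : ∫⁻ S, μ {w | ∀ i, L w (S i) = 0} ∂ν
        = ∫⁻ w, ν {S | ∀ i, L w (S i) = 0} ∂μ := by
      have h2 := Measure.prod_apply_symm (μ := ν) (ν := μ) hA2
      rw [Measure.prod_apply (μ := ν) (ν := μ) hA2] at h2
      exact h2
    have hl : ∫ S, ω S ∂ν = (∫⁻ S, μ {w | ∀ i, L w (S i) = 0} ∂ν).toReal := by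
      rw [show ω = fun S => (μ {w | ∀ i, L w (S i) = 0}).toReal from funext hωdef]
      exact integral_toReal (measurable_measure_prodMk_left hA2).aemeasurable
        (Filter.Eventually.of_forall fun S => measure_lt_top μ _)
    have hr : ∫ w, (1 - E w) ^ n ∂μ = (∫⁻ w, ν {S | ∀ i, L w (S i) = 0} ∂μ).toReal := by
      rw [show (fun w => (1 - E w) ^ n) = fun w => (ν {S | ∀ i, L w (S i) = 0}).toReal from
        funext fun w => (hνA' w).symm]
      refine integral_toReal ?_ (Filter.Eventually.of_forall fun w => measure_lt_top ν _)
      have hrw : (fun w => ν {S | ∀ i, L w (S i) = 0})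
          = fun w => (ENNReal.ofReal (1 - E w)) ^ n := funext hνA
      rw [hrw]
      exact ((measurable_const.sub mE).ennreal_ofReal.pow_const n).aemeasurable
    rw [hl, hr, hswap]
  -- C2 : mean of ωε
  set N : ℝ → ℝ :=
    fun ε => ∫ w, Set.indicator {w' | Emin + ε ≤ E w'} (fun w' => (1 - E w') ^ n) w ∂μ
    with hNdef
  have hNind_meas : ∀ ε : ℝ,
      Measurable fun w => Set.indicator {w' | Emin + ε ≤ E w'} (fun w' => (1 - E w') ^ n) w :=
    fun ε => mq.indicator (hEset ε)
  have hNind_int : ∀ ε : ℝ,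
      Integrable (fun w =>
        Set.indicator {w' | Emin + ε ≤ E w'} (fun w' => (1 - E w') ^ n) w) μ := by
    intro ε
    refine integrable_of_bdd' (hNind_meas ε).aestronglyMeasurable (C := 1) fun w => ?_
    by_cases h : w ∈ {w' | Emin + ε ≤ E w'}
    · rw [Set.indicator_of_mem h]
      exact abs_le.mpr ⟨by linarith [hq0 w], hq1 w⟩
    · rw [Set.indicator_of_notMem h]; simp
  have hC2 : ∀ ε : ℝ, ∫ S, ωε ε S ∂ν = N ε := by
    intro ε
    have hswap : ∫⁻ S, μ {w | Emin + ε ≤ E w ∧ ∀ i, L w (S i) = 0} ∂ν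
        = ∫⁻ w, ν {S | Emin + ε ≤ E w ∧ ∀ i, L w (S i) = 0} ∂μ := by
      have h2 := Measure.prod_apply_symm (μ := ν) (ν := μ) (hTε ε)
      rw [Measure.prod_apply (μ := ν) (ν := μ) (hTε ε)] at h2
      exact h2
    have hslice : ∀ w, ν {S | Emin + ε ≤ E w ∧ ∀ i, L w (S i) = 0}
        = Set.indicator {w' | Emin + ε ≤ E w'}
            (fun w' => (ENNReal.ofReal (1 - E w')) ^ n) w := by
      intro w
      by_cases h : Emin + ε ≤ E w
      · rw [Set.indicator_of_mem (show w ∈ {w' | Emin + ε ≤ E w'} from h), ← hνA w]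
        congr 1; ext S; simp [h]
      · rw [Set.indicator_of_notMem (show w ∉ {w' | Emin + ε ≤ E w'} from h)]
        have hempty : {S : Fin n → Z | Emin + ε ≤ E w ∧ ∀ i, L w (S i) = 0} = ∅ := by
          ext S; simp [h]
        rw [hempty, measure_empty]
    have hl : ∫ S, ωε ε S ∂ν
        = (∫⁻ S, μ {w | Emin + ε ≤ E w ∧ ∀ i, L w (S i) = 0} ∂ν).toReal := by
      rw [show ωε ε = fun S => (μ {w | Emin + ε ≤ E w ∧ ∀ i, L w (S i) = 0}).toReal from
        funext fun S => hωεdef ε S]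
      exact integral_toReal (measurable_measure_prodMk_left (hTε ε)).aemeasurable
        (Filter.Eventually.of_forall fun S => measure_lt_top μ _)
    have hr : N ε = (∫⁻ w, ν {S | Emin + ε ≤ E w ∧ ∀ i, L w (S i) = 0} ∂μ).toReal := by
      simp only [hNdef]
      have hptw : (fun w =>
          Set.indicator {w' | Emin + ε ≤ E w'} (fun w' => (1 - E w') ^ n) w)
          = fun w => (ν {S | Emin + ε ≤ E w ∧ ∀ i, L w (S i) = 0}).toReal := by
        funext w
        rw [hslice w]
        by_cases h : w ∈ {w' | Emin + ε ≤ E w'}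
        · rw [Set.indicator_of_mem h, Set.indicator_of_mem h, ENNReal.toReal_pow,
            ENNReal.toReal_ofReal (by linarith [hE1 w])]
        · rw [Set.indicator_of_notMem h, Set.indicator_of_notMem h]; simp
      rw [hptw]
      refine integral_toReal ?_ (Filter.Eventually.of_forall fun w => measure_lt_top ν _)
      have hrw : (fun w => ν {S | Emin + ε ≤ E w ∧ ∀ i, L w (S i) = 0})
          = fun w => Set.indicator {w' | Emin + ε ≤ E w'}
              (fun w' => (ENNReal.ofReal (1 - E w')) ^ n) w := funext hslice
      rw [hrw]
      exact (((measurable_const.sub mE).ennreal_ofReal.pow_const n).indicator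
        (hEset ε)).aemeasurable
    rw [hl, hr, hswap]
  -- basic bounds on φε and ωε
  have hωε_nonneg : ∀ ε S, 0 ≤ ωε ε S := fun ε S => by
    rw [hωεdef]; exact ENNReal.toReal_nonneg
  have hω_nonneg : ∀ S, 0 ≤ ω S := fun S => by
    rw [hωdef]; exact ENNReal.toReal_nonneg
  have hωε_le : ∀ ε S, ωε ε S ≤ ω S := fun ε S => by
    rw [hωεdef, hωdef]
    exact ENNReal.toReal_mono (measure_ne_top _ _) (measure_mono fun w hw => hw.2)
  have hφ0 : ∀ ε S, 0 ≤ φε ε S := fun ε S => by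
    rw [hφεdef]; exact div_nonneg (hωε_nonneg ε S) (hω_nonneg S)
  have hφ1 : ∀ ε S, φε ε S ≤ 1 := fun ε S => by
    rw [hφεdef]; exact div_le_one_of_le₀ (hωε_le ε S) (hω_nonneg S)
  -- C5 : per-ε bound on the mean of φε
  have hD : 0 < ∫ w, (1 - E w) ^ n ∂μ := hden
  have hC5 : ∀ ε, 0 ≤ ε → ε ≤ 1 - Emin →
      ∫ S, φε ε S ∂ν ≤ N ε / ∫ w, (1 - E w) ^ n ∂μ := by
    intro ε h0 h1
    have hc := hcorr ε h0 h1
    have hφω : ∫ S, φε ε S * ω S ∂ν = ∫ S, ωε ε S ∂ν := by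
      refine integral_congr_ae ?_
      filter_upwards [hωpos] with S hS
      rw [hφεdef, div_mul_cancel₀ _ (ne_of_gt hS)]
    rw [hφω, hC2 ε, hC1] at hc
    rw [le_div_iff₀ hD]
    linarith
  -- C6 : the ε-integral of N
  have hC6 : ∫ ε in I, N ε ∂volume = ∫ w, (E w - Emin) * (1 - E w) ^ n ∂μ := by
    have hFmeas : Measurable (Function.uncurry fun (ε : ℝ) (w : W) =>
        Set.indicator {w' | Emin + ε ≤ E w'} (fun w' => (1 - E w') ^ n) w) := by
      have hrw : (Function.uncurry fun (ε : ℝ) (w : W) =>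
          Set.indicator {w' | Emin + ε ≤ E w'} (fun w' => (1 - E w') ^ n) w)
          = Set.indicator {p : ℝ × W | Emin + p.1 ≤ E p.2}
              (fun p => (1 - E p.2) ^ n) := by
        funext p
        simp only [Function.uncurry]
        by_cases h : Emin + p.1 ≤ E p.2
        · rw [Set.indicator_of_mem
            (show p ∈ {p' : ℝ × W | Emin + p'.1 ≤ E p'.2} from h)]
          exact Set.indicator_of_mem (show p.2 ∈ {w' | Emin + p.1 ≤ E w'} from h) _
        · rw [Set.indicator_of_notMem
            (show p ∉ {p' : ℝ × W | Emin + p'.1 ≤ E p'.2} from h)]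
          exact Set.indicator_of_notMem (show p.2 ∉ {w' | Emin + p.1 ≤ E w'} from h) _
      rw [hrw]
      exact (mq.comp measurable_snd).indicator
        (measurableSet_le (measurable_const.add measurable_fst) (mE.comp measurable_snd))
    have hFint : Integrable (Function.uncurry fun (ε : ℝ) (w : W) =>
        Set.indicator {w' | Emin + ε ≤ E w'} (fun w' => (1 - E w') ^ n) w)
        ((volume.restrict I).prod μ) := by
      refine integrable_of_bdd' hFmeas.aestronglyMeasurable (C := 1) fun p => ?_
      simp only [Function.uncurry]
      by_cases h : p.2 ∈ {w' | Emin + p.1 ≤ E w'}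
      · rw [Set.indicator_of_mem h]
        exact abs_le.mpr ⟨by linarith [hq0 p.2], hq1 p.2⟩
      · rw [Set.indicator_of_notMem h]; simp
    have hswap := integral_integral_swap hFint
    have hinner : ∀ w, (∫ ε in I,
        Set.indicator {w' | Emin + ε ≤ E w'} (fun w' => (1 - E w') ^ n) w ∂volume)
        = (E w - Emin) * (1 - E w) ^ n := by
      intro w
      have hrw : (fun ε : ℝ =>
          Set.indicator {w' | Emin + ε ≤ E w'} (fun w' => (1 - E w') ^ n) w)
          = fun ε : ℝ => if ε ≤ E w - Emin then (1 - E w) ^ n else 0 := by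
        funext ε
        by_cases h : Emin + ε ≤ E w
        · rw [Set.indicator_of_mem (show w ∈ {w' | Emin + ε ≤ E w'} from h),
            if_pos (by linarith)]
        · rw [Set.indicator_of_notMem (show w ∉ {w' | Emin + ε ≤ E w'} from h),
            if_neg (by intro hc; exact h (by linarith))]
      rw [hrw, hIdef, integral_Ioc_ite (by linarith [hEmin w]) (by linarith [hE1 w])]
    calc ∫ ε in I, N ε ∂volume
        = ∫ w, (∫ ε in I,
            Set.indicator {w' | Emin + ε ≤ E w'} (fun w' => (1 - E w') ^ n) w ∂volume) ∂μ :=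
          hswap
      _ = ∫ w, (E w - Emin) * (1 - E w) ^ n ∂μ := by
          exact integral_congr_ae (Filter.Eventually.of_forall fun w => hinner w)
  -- C3 : a.e. decomposition of ES
  have hC3 : ∀ᵐ S ∂ν, ES S = Emin + ∫ ε in I, φε ε S ∂volume := by
    filter_upwards [hωpos] with S hS
    have hωne : ω S ≠ 0 := ne_of_gt hS
    have hΩm : MeasurableSet {w | ∀ i, L w (S i) = 0} := hΩS S
    -- Fubini for the layer-cake decomposition
    have hGmeas : Measurable (Function.uncurry fun (ε : ℝ) (w : W) =>
        Set.indicator ({w' | Emin + ε ≤ E w'} ∩ {w' | ∀ i, L w' (S i) = 0})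
          (1 : W → ℝ) w) := by
      have hrw : (Function.uncurry fun (ε : ℝ) (w : W) =>
          Set.indicator ({w' | Emin + ε ≤ E w'} ∩ {w' | ∀ i, L w' (S i) = 0})
            (1 : W → ℝ) w)
          = Set.indicator {p : ℝ × W | Emin + p.1 ≤ E p.2 ∧ ∀ i, L p.2 (S i) = 0}
              (1 : ℝ × W → ℝ) := by
        funext p
        simp only [Function.uncurry]
        by_cases h : Emin + p.1 ≤ E p.2 ∧ ∀ i, L p.2 (S i) = 0
        · rw [Set.indicator_of_mem
            (show p ∈ {p' : ℝ × W | Emin + p'.1 ≤ E p'.2 ∧ ∀ i, L p'.2 (S i) = 0} from h)]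
          exact Set.indicator_of_mem
            (show p.2 ∈ {w' | Emin + p.1 ≤ E w'} ∩ {w' | ∀ i, L w' (S i) = 0}
              from ⟨h.1, h.2⟩) _
        · rw [Set.indicator_of_notMem
            (show p ∉ {p' : ℝ × W | Emin + p'.1 ≤ E p'.2 ∧ ∀ i, L p'.2 (S i) = 0} from h)]
          exact Set.indicator_of_notMem
            (show p.2 ∉ {w' | Emin + p.1 ≤ E w'} ∩ {w' | ∀ i, L w' (S i) = 0}
              from fun hc => h ⟨hc.1, hc.2⟩) _
      rw [hrw]
      exact measurable_const.indicator
        ((measurableSet_le (measurable_const.add measurable_fst)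
          (mE.comp measurable_snd)).inter (measurable_snd (hΩS S)))
    have hGint : Integrable (Function.uncurry fun (ε : ℝ) (w : W) =>
        Set.indicator ({w' | Emin + ε ≤ E w'} ∩ {w' | ∀ i, L w' (S i) = 0})
          (1 : W → ℝ) w) ((volume.restrict I).prod μ) := by
      refine integrable_of_bdd' hGmeas.aestronglyMeasurable (C := 1) fun p => ?_
      simp only [Function.uncurry]
      by_cases h : p.2 ∈ {w' | Emin + p.1 ≤ E w'} ∩ {w' | ∀ i, L w' (S i) = 0}
      · rw [Set.indicator_of_mem h]; simp
      · rw [Set.indicator_of_notMem h]; simp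
    have hswap := integral_integral_swap hGint
    have hb : ∫ ε in I, ωε ε S ∂volume
        = ∫ w in {w | ∀ i, L w (S i) = 0}, (E w - Emin) ∂μ := by
      have hlhs : ∀ ε : ℝ, ∫ w, Set.indicator
          ({w' | Emin + ε ≤ E w'} ∩ {w' | ∀ i, L w' (S i) = 0}) (1 : W → ℝ) w ∂μ
          = ωε ε S := by
        intro ε
        rw [integral_indicator_one ((hEset ε).inter hΩm), hωεdef]
        rfl
      have hrhs : ∀ w, (∫ ε in I, Set.indicator
          ({w' | Emin + ε ≤ E w'} ∩ {w' | ∀ i, L w' (S i) = 0}) (1 : W → ℝ) w ∂volume)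
          = Set.indicator {w' | ∀ i, L w' (S i) = 0} (fun w' => E w' - Emin) w := by
        intro w
        by_cases hw : w ∈ {w' | ∀ i, L w' (S i) = 0}
        · have hrw : (fun ε : ℝ => Set.indicator
              ({w' | Emin + ε ≤ E w'} ∩ {w' | ∀ i, L w' (S i) = 0}) (1 : W → ℝ) w)
              = fun ε : ℝ => if ε ≤ E w - Emin then (1:ℝ) else 0 := by
            funext ε
            by_cases h : Emin + ε ≤ E w
            · rw [Set.indicator_of_mem
                (show w ∈ {w' | Emin + ε ≤ E w'} ∩ {w' | ∀ i, L w' (S i) = 0}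
                  from ⟨h, hw⟩), if_pos (by linarith)]
              rfl
            · rw [Set.indicator_of_notMem
                (show w ∉ {w' | Emin + ε ≤ E w'} ∩ {w' | ∀ i, L w' (S i) = 0}
                  from fun hc => h hc.1),
                if_neg (by intro hc; exact h (by linarith))]
          rw [hrw, hIdef, integral_Ioc_ite (by linarith [hEmin w]) (by linarith [hE1 w]),
            Set.indicator_of_mem hw, mul_one]
        · have hrw : (fun ε : ℝ => Set.indicator
              ({w' | Emin + ε ≤ E w'} ∩ {w' | ∀ i, L w' (S i) = 0}) (1 : W → ℝ) w)
              = fun _ : ℝ => (0:ℝ) := by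
            funext ε
            exact Set.indicator_of_notMem
              (show w ∉ {w' | Emin + ε ≤ E w'} ∩ {w' | ∀ i, L w' (S i) = 0}
                from fun hc => hw hc.2) _
          rw [hrw, Set.indicator_of_notMem hw]
          simp
      calc ∫ ε in I, ωε ε S ∂volume
          = ∫ ε in I, (∫ w, Set.indicator
              ({w' | Emin + ε ≤ E w'} ∩ {w' | ∀ i, L w' (S i) = 0})
              (1 : W → ℝ) w ∂μ) ∂volume := by
            exact (integral_congr_ae (Filter.Eventually.of_forall fun ε => (hlhs ε).symm))
        _ = ∫ w, (∫ ε in I, Set.indicator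
              ({w' | Emin + ε ≤ E w'} ∩ {w' | ∀ i, L w' (S i) = 0})
              (1 : W → ℝ) w ∂volume) ∂μ := hswap
        _ = ∫ w, Set.indicator {w' | ∀ i, L w' (S i) = 0} (fun w' => E w' - Emin) w ∂μ :=
            integral_congr_ae (Filter.Eventually.of_forall fun w => hrhs w)
        _ = ∫ w in {w | ∀ i, L w (S i) = 0}, (E w - Emin) ∂μ := integral_indicator hΩm
    -- split the set integral of E
    have hsub_int : Integrable (fun w => E w - Emin)
        (μ.restrict {w | ∀ i, L w (S i) = 0}) :=
      integrable_of_bdd' (mE.sub measurable_const).aestronglyMeasurable (C := 1) fun w =>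
        abs_le.mpr ⟨by linarith [hEmin w], by linarith [hE1 w]⟩
    have hsplit : ∫ w in {w | ∀ i, L w (S i) = 0}, E w ∂μ
        = ω S * Emin + ∫ w in {w | ∀ i, L w (S i) = 0}, (E w - Emin) ∂μ := by
      have heq : ∫ w in {w | ∀ i, L w (S i) = 0}, E w ∂μ
          = ∫ w in {w | ∀ i, L w (S i) = 0}, ((E w - Emin) + Emin) ∂μ := by
        congr 1; funext w; ring
      rw [heq, integral_add hsub_int (integrable_const Emin), setIntegral_const,
        smul_eq_mul, hωdef, add_comm]; rfl
    rw [hESdef S, hsplit, ← hb]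
    have hφint' : ∫ ε in I, φε ε S ∂volume = (∫ ε in I, ωε ε S ∂volume) / ω S := by
      simp_rw [hφεdef]
      exact integral_div (ω S) _
    rw [hφint']
    field_simp
  -- joint measurability and integrability of φε over ν × (volume.restrict I)
  have hT2 : MeasurableSet {p : ((Fin n → Z) × ℝ) × W |
      Emin + p.1.2 ≤ E p.2 ∧ ∀ i, L p.2 (p.1.1 i) = 0} := by
    refine (measurableSet_le (measurable_const.add measurable_fst.snd)
      (mE.comp measurable_snd)).inter ?_
    show MeasurableSet {p : ((Fin n → Z) × ℝ) × W | ∀ i, L p.2 (p.1.1 i) = 0}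
    have hset : {p : ((Fin n → Z) × ℝ) × W | ∀ i, L p.2 (p.1.1 i) = 0}
        = ⋂ i, (fun p : ((Fin n → Z) × ℝ) × W => L p.2 (p.1.1 i)) ⁻¹' {0} := by
      ext p; simp
    rw [hset]
    exact MeasurableSet.iInter fun i =>
      (hLmeas.comp (measurable_snd.prodMk
        ((measurable_pi_apply i).comp measurable_fst.fst))) (measurableSet_singleton 0)
  have hφmeas : Measurable (Function.uncurry fun (S : Fin n → Z) (ε : ℝ) => φε ε S) := by
    have hnum : Measurable fun p : (Fin n → Z) × ℝ => ωε p.2 p.1 := by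
      have hrw : (fun p : (Fin n → Z) × ℝ => ωε p.2 p.1)
          = fun p => (μ (Prod.mk p ⁻¹' {q : ((Fin n → Z) × ℝ) × W |
              Emin + q.1.2 ≤ E q.2 ∧ ∀ i, L q.2 (q.1.1 i) = 0})).toReal :=
        funext fun p => hωεdef p.2 p.1
      rw [hrw]
      exact (measurable_measure_prodMk_left hT2).ennreal_toReal
    have hrw : (Function.uncurry fun (S : Fin n → Z) (ε : ℝ) => φε ε S)
        = fun p : (Fin n → Z) × ℝ => ωε p.2 p.1 / ω p.1 :=
      funext fun p => hφεdef p.2 p.1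
    rw [hrw]
    exact hnum.div (hωmeas.comp measurable_fst)
  have hφint_prod : Integrable (Function.uncurry fun (S : Fin n → Z) (ε : ℝ) => φε ε S)
      (ν.prod (volume.restrict I)) := by
    refine integrable_of_bdd' hφmeas.aestronglyMeasurable (C := 1) fun p => ?_
    simp only [Function.uncurry]
    exact abs_le.mpr ⟨by linarith [hφ0 p.2 p.1], hφ1 p.2 p.1⟩
  have hGint2 : Integrable (fun S => ∫ ε in I, φε ε S ∂volume) ν :=
    hφint_prod.integral_prod_left
  -- integrability of N / D on I
  have hN0 : ∀ ε, 0 ≤ N ε := fun ε =>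
    integral_nonneg fun w => Set.indicator_nonneg (fun w' _ => hq0 w') w
  have hN_le : ∀ ε, N ε ≤ ∫ w, (1 - E w) ^ n ∂μ := fun ε =>
    integral_mono (hNind_int ε) hq_int
      (fun w => Set.indicator_le_self' (fun w' _ => hq0 w') w)
  have hNanti : Antitone N := by
    intro a b hab
    refine integral_mono (hNind_int b) (hNind_int a) fun w => ?_
    refine Set.indicator_le_indicator_of_subset ?_ (fun w' => hq0 w') w
    intro w' hw'
    have hbw : Emin + b ≤ E w' := hw'
    show Emin + a ≤ E w'
    linarith
  have hNint : Integrable N (volume.restrict I) :=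
    integrable_of_bdd' (hNanti.measurable).aestronglyMeasurable
      (C := ∫ w, (1 - E w) ^ n ∂μ)
      fun ε => abs_le.mpr ⟨by linarith [hN0 ε, hN_le ε, hD], hN_le ε⟩
  -- final assembly
  have hstep1 : ∫ S, ES S ∂ν = Emin + ∫ S, (∫ ε in I, φε ε S ∂volume) ∂ν := by
    rw [integral_congr_ae hC3, integral_add (integrable_const Emin) hGint2, integral_const]
    simp
  have hstep2 : ∫ S, (∫ ε in I, φε ε S ∂volume) ∂ν
      = ∫ ε in I, (∫ S, φε ε S ∂ν) ∂volume := integral_integral_swap hφint_prod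
  have hstep3 : ∫ ε in I, (∫ S, φε ε S ∂ν) ∂volume
      ≤ ∫ ε in I, N ε / ∫ w, (1 - E w) ^ n ∂μ ∂volume := by
    refine integral_mono_of_nonneg
      (Filter.Eventually.of_forall fun ε => integral_nonneg fun S => hφ0 ε S)
      (hNint.div_const _) ?_
    filter_upwards [ae_restrict_mem (μ := volume) (s := I) measurableSet_Ioc] with ε hε
    exact hC5 ε hε.1.le hε.2
  have hstep4 : ∫ ε in I, N ε / ∫ w, (1 - E w) ^ n ∂μ ∂volume
      = (∫ w, (E w - Emin) * (1 - E w) ^ n ∂μ) / ∫ w, (1 - E w) ^ n ∂μ := by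
    rw [integral_div, hC6]
  have hEq_int : Integrable (fun w => E w * (1 - E w) ^ n) μ :=
    integrable_of_bdd' (mE.mul mq).aestronglyMeasurable (C := 1) fun w => by
      rw [abs_mul, abs_of_nonneg (hE0 w), abs_of_nonneg (hq0 w)]
      calc E w * (1 - E w) ^ n ≤ 1 * 1 :=
            mul_le_mul (hE1 w) (hq1 w) (hq0 w) zero_le_one
        _ = 1 := by ring
  have hsub2 : ∫ w, (E w - Emin) * (1 - E w) ^ n ∂μ
      = ∫ w, E w * (1 - E w) ^ n ∂μ - Emin * ∫ w, (1 - E w) ^ n ∂μ := by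
    rw [← integral_const_mul, ← integral_sub hEq_int (hq_int.const_mul Emin)]
    congr 1; funext w; ring
  have hchain : ∫ S, ES S ∂ν
      ≤ Emin + (∫ w, (E w - Emin) * (1 - E w) ^ n ∂μ) / ∫ w, (1 - E w) ^ n ∂μ := by
    rw [hstep1, hstep2, ← hstep4]
    linarith [hstep3]
  calc ∫ S, ES S ∂ν
      ≤ Emin + (∫ w, (E w - Emin) * (1 - E w) ^ n ∂μ) / ∫ w, (1 - E w) ^ n ∂μ := hchain
    _ = (∫ w, E w * (1 - E w) ^ n ∂μ) / ∫ w, (1 - E w) ^ n ∂μ := by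
        rw [hsub2]
        field_simp
        ring
end

section
/- (Mean true error formula, equation (13)) Fix n ∈ ℕ. Assume ω(S) > 0 for P^n-almost every S, that ∫_W (1 − E(w))^n dμ(w) > 0, that all the quantities involved are P^n-integrable, and that for every ε with 0 ≤ ε ≤ 1 − E_min equality ⟨φ_ε(S)⟩_S = ⟨ω_ε(S)⟩_S/⟨ω(S)⟩_S holds (no correlation between φ_ε(S) and ω(S)). Define E_S := (1/ω(S)) · ∫_{{w ∈ W : L(w,z_i)=0 for all i}} E(w) dμ(w) and E_n := ⟨E_S⟩_S. Then E_n = ∫_W E(w)·(1 − E(w))^n dμ(w) / ∫_W (1 − E(w))^n dμ(w). -/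
open MeasureTheory
open scoped ENNReal
section
variable {W Z : Type*} [MeasurableSpace W] [MeasurableSpace Z]

lemma hE_meas (P : Measure Z) [IsProbabilityMeasure P]
    (L : W → Z → ℝ) (hLmeas : Measurable (Function.uncurry L))
    (E : W → ℝ) (hE : ∀ w, E w = ∫ z, L w z ∂P) : Measurable E := by
  have : E = fun w => ∫ z, L w z ∂P := funext hE
  rw [this]
  exact (hLmeas.stronglyMeasurable.integral_prod_right').measurable

lemma hP0 (P : Measure Z) [IsProbabilityMeasure P]
    (L : W → Z → ℝ) (hLmeas : Measurable (Function.uncurry L))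
    (hL01 : ∀ w z, L w z = 0 ∨ L w z = 1)
    (E : W → ℝ) (hE : ∀ w, E w = ∫ z, L w z ∂P) (w : W) :
    P {z | L w z = 0} = ENNReal.ofReal (1 - E w) ∧ 0 ≤ E w ∧ E w ≤ 1 := by
  have hLw : Measurable (L w) := hLmeas.of_uncurry_left
  have hset : MeasurableSet {z | L w z = 1} := hLw (measurableSet_singleton 1)
  have hind : L w = Set.indicator {z | L w z = 1} (fun _ => (1:ℝ)) := by
    funext z
    rcases hL01 w z with h | h <;> simp [Set.indicator, h]
  have hEw : E w = (P {z | L w z = 1}).toReal := by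
    rw [hE, hind, integral_indicator hset]
    simp
    rfl
  have hcompl : {z | L w z = 0} = {z | L w z = 1}ᶜ := by
    ext z; rcases hL01 w z with h | h <;> simp [h]
  have hle1 : P {z | L w z = 1} ≤ 1 := prob_le_one
  have h1 : P {z | L w z = 0} = 1 - P {z | L w z = 1} := by
    rw [hcompl, measure_compl hset (measure_ne_top _ _)]
    simp
  refine ⟨?_, ?_, ?_⟩
  · have key : ((1:ℝ≥0∞) - P {z | L w z = 1}).toReal = 1 - (P {z | L w z = 1}).toReal := by
      rw [ENNReal.toReal_sub_of_le hle1 (by simp)]; simp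
    rw [h1, hEw, ← key, ENNReal.ofReal_toReal (by finiteness)]
  · rw [hEw]; positivity
  · rw [hEw]
    simpa using ENNReal.toReal_mono (by simp) hle1

lemma hE_meas' (P : Measure Z) [IsProbabilityMeasure P]
    (L : W → Z → ℝ) (hLmeas : Measurable (Function.uncurry L))
    (E : W → ℝ) (hE : ∀ w, E w = ∫ z, L w z ∂P) : Measurable E := by
  have : E = fun w => ∫ z, L w z ∂P := funext hE
  rw [this]
  exact (hLmeas.stronglyMeasurable.integral_prod_right').measurable

lemma mean_omega (μ : Measure W) [IsFiniteMeasure μ] (P : Measure Z) [IsProbabilityMeasure P]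
    (L : W → Z → ℝ) (hLmeas : Measurable (Function.uncurry L))
    (E : W → ℝ) (hEm : Measurable E)
    (hP0 : ∀ w, P {z | L w z = 0} = ENNReal.ofReal (1 - E w))
    (hE1 : ∀ w, E w ≤ 1)
    (n : ℕ) (C : Set W) (hC : MeasurableSet C) :
    ∫ S, (μ {w | w ∈ C ∧ ∀ i, L w (S i) = 0}).toReal ∂(Measure.pi fun _ : Fin n => P)
      = ∫ w in C, (1 - E w) ^ n ∂μ := by
  set Pn : Measure (Fin n → Z) := Measure.pi fun _ : Fin n => P with hPn
  set T : Set ((Fin n → Z) × W) := {p | p.2 ∈ C ∧ ∀ i, L p.2 (p.1 i) = 0} with hTdef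
  have hT : MeasurableSet T := by
    have h1 : MeasurableSet {p : (Fin n → Z) × W | p.2 ∈ C} := measurable_snd hC
    have h2 : ∀ i : Fin n, MeasurableSet {p : (Fin n → Z) × W | L p.2 (p.1 i) = 0} := by
      intro i
      exact (hLmeas.comp (measurable_snd.prodMk
        ((measurable_pi_apply i).comp measurable_fst))) (measurableSet_singleton 0)
    have : T = {p : (Fin n → Z) × W | p.2 ∈ C} ∩ ⋂ i, {p | L p.2 (p.1 i) = 0} := by
      ext p; simp [hTdef, Set.mem_iInter]
    rw [this]
    exact h1.inter (MeasurableSet.iInter h2)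
  have hkey : ∀ S : Fin n → Z, {w | w ∈ C ∧ ∀ i, L w (S i) = 0} = Prod.mk S ⁻¹' T :=
    fun S => rfl
  have hmeas : Measurable fun S => μ (Prod.mk S ⁻¹' T) := measurable_measure_prodMk_left hT
  have hlhs : ∫ S, (μ {w | w ∈ C ∧ ∀ i, L w (S i) = 0}).toReal ∂Pn
      = (∫⁻ S, μ (Prod.mk S ⁻¹' T) ∂Pn).toReal := by
    simp_rw [hkey]
    exact integral_toReal hmeas.aemeasurable (ae_of_all _ fun S => measure_lt_top μ _)
  have hswap : ∫⁻ S, μ (Prod.mk S ⁻¹' T) ∂Pn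
      = ∫⁻ w, Pn ((fun S => (S, w)) ⁻¹' T) ∂μ := by
    rw [← Measure.prod_apply hT, Measure.prod_apply_symm hT]
  have hslice : ∀ w, Pn ((fun S => (S, w)) ⁻¹' T)
      = C.indicator (fun w => ENNReal.ofReal ((1 - E w) ^ n)) w := by
    intro w
    by_cases hw : w ∈ C
    · have : ((fun S => (S, w)) ⁻¹' T) = Set.pi Set.univ (fun _ : Fin n => {z | L w z = 0}) := by
        ext S; simp [hTdef, hw, Set.mem_pi]
      rw [this, Measure.pi_pi]
      simp [hP0 w, Set.indicator_of_mem hw,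
        ENNReal.ofReal_pow (by linarith [hE1 w] : (0:ℝ) ≤ 1 - E w)]
    · have : ((fun S => (S, w)) ⁻¹' T) = ∅ := by
        ext S; simp [hTdef, hw]
      rw [this]
      simp [Set.indicator_of_notMem hw]
  have hrhs : ∫ w in C, (1 - E w) ^ n ∂μ
      = (∫⁻ w in C, ENNReal.ofReal ((1 - E w) ^ n) ∂μ).toReal :=
    integral_eq_lintegral_of_nonneg_ae
      (ae_of_all _ fun w => pow_nonneg (by linarith [hE1 w]) n)
      ((measurable_const.sub hEm).pow_const n).aestronglyMeasurable
  rw [hlhs, hswap]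
  simp_rw [hslice]
  rw [hrhs]
  congr 1
  exact lintegral_indicator hC _

lemma layer_cake_set (μ : Measure W) [IsFiniteMeasure μ]
    (E : W → ℝ) (hEm : Measurable E)
    (Emin : ℝ) (hElo : ∀ w, Emin ≤ E w) (hE1 : ∀ w, E w ≤ 1)
    (A : Set W) (hA : MeasurableSet A) :
    ∫ w in A, E w ∂μ = Emin * (μ A).toReal
      + ∫ ε in Set.Ioc 0 (1 - Emin), (μ ({w | Emin + ε ≤ E w} ∩ A)).toReal := by
  have hbound : ∀ w, |E w| ≤ |Emin| + 1 := by
    intro w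
    rw [abs_le]
    constructor
    · linarith [hElo w, neg_abs_le Emin]
    · linarith [hE1 w, abs_nonneg Emin]
  have hEint : IntegrableOn E A μ :=
    Integrable.mono' (integrable_const (|Emin| + 1)) hEm.aestronglyMeasurable
      (ae_of_all _ hbound)
  -- f w ε = indicator
  set f : W → ℝ → ℝ := fun w ε => if Emin + ε ≤ E w then (1:ℝ) else 0 with hf
  have hpt : ∀ w, E w - Emin = ∫ ε in Set.Ioc 0 (1 - Emin), f w ε := by
    intro w
    have h1 : f w = (Set.Iic (E w - Emin)).indicator (fun _ => (1:ℝ)) := by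
      funext ε
      by_cases h : Emin + ε ≤ E w
      · rw [hf]; simp only [h, if_true]
        rw [Set.indicator_of_mem (by simpa [Set.mem_Iic] using by linarith)]
      · rw [hf]; simp only [h, if_false]
        rw [Set.indicator_of_notMem (by simp [Set.mem_Iic]; linarith)]
    rw [h1, setIntegral_indicator measurableSet_Iic]
    have h2 : Set.Ioc 0 (1 - Emin) ∩ Set.Iic (E w - Emin) = Set.Ioc 0 (E w - Emin) := by
      rw [Set.Ioc_inter_Iic, min_eq_right (by linarith [hE1 w])]
    rw [h2]
    simp [Real.volume_Ioc, ENNReal.toReal_ofReal (by linarith [hElo w] : (0:ℝ) ≤ E w - Emin), hElo w]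
  -- split
  have hsplit : ∫ w in A, E w ∂μ
      = Emin * (μ A).toReal + ∫ w in A, (E w - Emin) ∂μ := by
    have : ∫ w in A, (E w - Emin) ∂μ = ∫ w in A, E w ∂μ - ∫ w in A, (Emin : ℝ) ∂μ :=
      integral_sub hEint (integrable_const _)
    rw [this, setIntegral_const]
    simp [smul_eq_mul]
    simp only [Measure.real]
    ring
  rw [hsplit]
  congr 1
  -- Fubini
  haveI : IsFiniteMeasure ((volume : Measure ℝ).restrict (Set.Ioc 0 (1 - Emin))) := by
    constructor
    rw [Measure.restrict_apply_univ]
    exact measure_Ioc_lt_top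
  have hsetmeas : MeasurableSet {p : W × ℝ | Emin + p.2 ≤ E p.1} :=
    measurableSet_le (measurable_const.add measurable_snd) (hEm.comp measurable_fst)
  have hfm : Measurable (Function.uncurry f) := by
    have : Function.uncurry f = fun p : W × ℝ => if Emin + p.2 ≤ E p.1 then (1:ℝ) else 0 := rfl
    rw [this]
    exact Measurable.ite hsetmeas measurable_const measurable_const
  have hfint : Integrable (Function.uncurry f)
      ((μ.restrict A).prod ((volume : Measure ℝ).restrict (Set.Ioc 0 (1 - Emin)))) := by
    refine Integrable.mono' (integrable_const 1) hfm.aestronglyMeasurable (ae_of_all _ ?_)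
    rintro ⟨w, ε⟩
    by_cases h : Emin + ε ≤ E w <;> simp [Function.uncurry, hf, h]
  have hswap := integral_integral_swap hfint
  calc ∫ w in A, (E w - Emin) ∂μ
      = ∫ w in A, ∫ ε in Set.Ioc 0 (1 - Emin), f w ε ∂(volume : Measure ℝ) ∂μ := by
        exact integral_congr_ae (ae_of_all _ fun w => hpt w)
    _ = ∫ ε in Set.Ioc 0 (1 - Emin), ∫ w in A, f w ε ∂μ ∂(volume : Measure ℝ) := hswap
    _ = ∫ ε in Set.Ioc 0 (1 - Emin), (μ ({w | Emin + ε ≤ E w} ∩ A)).toReal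
          ∂(volume : Measure ℝ) := by
        refine integral_congr_ae (ae_of_all _ fun ε => ?_)
        show ∫ w in A, f w ε ∂μ = (μ ({w | Emin + ε ≤ E w} ∩ A)).toReal
        have h1 : (fun w => f w ε) = ({w | Emin + ε ≤ E w}).indicator (fun _ => (1:ℝ)) := by
          funext w
          by_cases h : Emin + ε ≤ E w
          · rw [hf]; simp only [h, if_true]
            rw [Set.indicator_of_mem (by simpa using h)]
          · rw [hf]; simp only [h, if_false]
            rw [Set.indicator_of_notMem (by simpa using h)]
        have hset' : MeasurableSet {w | Emin + ε ≤ E w} := measurableSet_le measurable_const hEm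
        rw [h1, setIntegral_indicator hset', setIntegral_const]
        simp [Set.inter_comm]
        rfl
  done

lemma layer_cake_weighted (μ : Measure W) [IsFiniteMeasure μ]
    (E : W → ℝ) (hEm : Measurable E)
    (Emin : ℝ) (hElo : ∀ w, Emin ≤ E w) (hE0 : ∀ w, 0 ≤ E w) (hE1 : ∀ w, E w ≤ 1)
    (n : ℕ) :
    ∫ ε in Set.Ioc 0 (1 - Emin), (∫ w in {w | Emin + ε ≤ E w}, (1 - E w) ^ n ∂μ)
      = ∫ w, (E w - Emin) * (1 - E w) ^ n ∂μ := by
  set f : W → ℝ → ℝ := fun w ε => (if Emin + ε ≤ E w then (1:ℝ) else 0) * (1 - E w) ^ n with hf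
  have hpt : ∀ w, (E w - Emin) * (1 - E w) ^ n = ∫ ε in Set.Ioc 0 (1 - Emin), f w ε := by
    intro w
    rw [show (∫ ε in Set.Ioc 0 (1 - Emin), f w ε)
        = (∫ ε in Set.Ioc 0 (1 - Emin), (if Emin + ε ≤ E w then (1:ℝ) else 0)) * (1 - E w) ^ n
        from integral_mul_const _ _]
    congr 1
    have h1 : (fun ε => if Emin + ε ≤ E w then (1:ℝ) else 0)
        = (Set.Iic (E w - Emin)).indicator (fun _ => (1:ℝ)) := by
      funext ε
      by_cases h : Emin + ε ≤ E w
      · simp only [h, if_true]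
        rw [Set.indicator_of_mem (by simpa [Set.mem_Iic] using by linarith)]
      · simp only [h, if_false]
        rw [Set.indicator_of_notMem (by simp [Set.mem_Iic]; linarith)]
    rw [h1, setIntegral_indicator measurableSet_Iic]
    rw [show Set.Ioc 0 (1 - Emin) ∩ Set.Iic (E w - Emin) = Set.Ioc 0 (E w - Emin) by
      rw [Set.Ioc_inter_Iic, min_eq_right (by linarith [hE1 w])]]
    simp [Real.volume_Ioc, ENNReal.toReal_ofReal (by linarith [hElo w] : (0:ℝ) ≤ E w - Emin), hElo w]
  haveI : IsFiniteMeasure ((volume : Measure ℝ).restrict (Set.Ioc 0 (1 - Emin))) := by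
    constructor
    rw [Measure.restrict_apply_univ]
    exact measure_Ioc_lt_top
  have hsetmeas : MeasurableSet {p : W × ℝ | Emin + p.2 ≤ E p.1} :=
    measurableSet_le (measurable_const.add measurable_snd) (hEm.comp measurable_fst)
  have hfm : Measurable (Function.uncurry f) := by
    have : Function.uncurry f = fun p : W × ℝ =>
        (if Emin + p.2 ≤ E p.1 then (1:ℝ) else 0) * (1 - E p.1) ^ n := rfl
    rw [this]
    exact (Measurable.ite hsetmeas measurable_const measurable_const).mul
      (((measurable_const.sub hEm).pow_const n).comp measurable_fst)
  have hfint : Integrable (Function.uncurry f)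
      (μ.prod ((volume : Measure ℝ).restrict (Set.Ioc 0 (1 - Emin)))) := by
    refine Integrable.mono' (integrable_const 1) hfm.aestronglyMeasurable (ae_of_all _ ?_)
    rintro ⟨w, ε⟩
    have h1 : |(1 - E w) ^ n| ≤ 1 := by
      rw [abs_pow]
      refine pow_le_one₀ (abs_nonneg _) ?_
      rw [abs_le]; constructor <;> [linarith [hE1 w]; linarith [hE0 w]]
    by_cases h : Emin + ε ≤ E w <;>
      simp only [Function.uncurry, hf, h, if_true, if_false, one_mul, zero_mul, abs_zero] <;>
      [exact h1; norm_num]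
  have hswap := integral_integral_swap hfint
  rw [show (∫ w, (E w - Emin) * (1 - E w) ^ n ∂μ)
      = ∫ w, (∫ ε in Set.Ioc 0 (1 - Emin), f w ε) ∂μ from
    integral_congr_ae (ae_of_all _ fun w => hpt w)]
  rw [hswap]
  refine integral_congr_ae (ae_of_all _ fun ε => ?_)
  show (∫ w in {w | Emin + ε ≤ E w}, (1 - E w) ^ n ∂μ) = ∫ w, f w ε ∂μ
  have hset' : MeasurableSet {w | Emin + ε ≤ E w} := measurableSet_le measurable_const hEm
  have h1 : (fun w => f w ε)
      = ({w | Emin + ε ≤ E w}).indicator (fun w => (1 - E w) ^ n) := by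
    funext w
    by_cases h : Emin + ε ≤ E w
    · simp only [hf, h, if_true, one_mul]
      rw [Set.indicator_of_mem (by simpa using h)]
    · simp only [hf, h, if_false, zero_mul]
      rw [Set.indicator_of_notMem (by simpa using h)]
  rw [h1, integral_indicator hset']


end

/-- Mean true error formula, equation (13):
`E_n = ∫_W E(w)(1-E(w))^n dμ / ∫_W (1-E(w))^n dμ`. -/
theorem mean_true_error_formula
    {W Z : Type*} [MeasurableSpace W] [MeasurableSpace Z]
    (μ : Measure W) [IsFiniteMeasure μ] (hΩ : 0 < μ Set.univ)
    (P : Measure Z) [IsProbabilityMeasure P]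
    (L : W → Z → ℝ) (hLmeas : Measurable (Function.uncurry L))
    (hL01 : ∀ w z, L w z = 0 ∨ L w z = 1)
    (E : W → ℝ) (hE : ∀ w, E w = ∫ z, L w z ∂P)
    (Emin : ℝ) (hEmin0 : 0 ≤ Emin) (hEmin1 : Emin ≤ 1)
    (hEmin : ∀ w, Emin ≤ E w)
    (n : ℕ)
    (ω : (Fin n → Z) → ℝ) (ωε φε : ℝ → (Fin n → Z) → ℝ)
    (ES : (Fin n → Z) → ℝ)
    (hωdef : ∀ S, ω S = (μ {w | ∀ i, L w (S i) = 0}).toReal)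
    (hωεdef : ∀ ε S,
      ωε ε S = (μ {w | Emin + ε ≤ E w ∧ ∀ i, L w (S i) = 0}).toReal)
    (hφεdef : ∀ ε S, φε ε S = ωε ε S / ω S)
    (hESdef : ∀ S,
      ES S = (1 / ω S) * ∫ w in {w | ∀ i, L w (S i) = 0}, E w ∂μ)
    (hωpos : ∀ᵐ S ∂(Measure.pi fun _ : Fin n => P), 0 < ω S)
    (hden : 0 < ∫ w, (1 - E w) ^ n ∂μ)
    (hωint : Integrable ω (Measure.pi fun _ : Fin n => P))
    (hωεint : ∀ ε, 0 ≤ ε → ε ≤ 1 - Emin →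
      Integrable (ωε ε) (Measure.pi fun _ : Fin n => P))
    (hφεint : ∀ ε, 0 ≤ ε → ε ≤ 1 - Emin →
      Integrable (φε ε) (Measure.pi fun _ : Fin n => P))
    (hESint : Integrable ES (Measure.pi fun _ : Fin n => P))
    (heq : ∀ ε, 0 ≤ ε → ε ≤ 1 - Emin →
      ∫ S, φε ε S ∂(Measure.pi fun _ : Fin n => P)
        = (∫ S, ωε ε S ∂(Measure.pi fun _ : Fin n => P))
            / (∫ S, ω S ∂(Measure.pi fun _ : Fin n => P))) :
    ∫ S, ES S ∂(Measure.pi fun _ : Fin n => P)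
      = (∫ w, E w * (1 - E w) ^ n ∂μ) / (∫ w, (1 - E w) ^ n ∂μ) := by
  classical
  set Pn : Measure (Fin n → Z) := Measure.pi fun _ : Fin n => P with hPndef
  have hEm : Measurable E := hE_meas' P L hLmeas E hE
  have hP0w : ∀ w, P {z | L w z = 0} = ENNReal.ofReal (1 - E w) :=
    fun w => (hP0 P L hLmeas hL01 E hE w).1
  have hE0' : ∀ w, 0 ≤ E w := fun w => (hP0 P L hLmeas hL01 E hE w).2.1
  have hE1' : ∀ w, E w ≤ 1 := fun w => (hP0 P L hLmeas hL01 E hE w).2.2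
  set I : Set ℝ := Set.Ioc 0 (1 - Emin) with hIdef
  set D : ℝ := ∫ w, (1 - E w) ^ n ∂μ with hDdef
  set A : (Fin n → Z) → Set W := fun S => {w | ∀ i, L w (S i) = 0} with hAdef
  have hA : ∀ S, MeasurableSet (A S) := by
    intro S
    have : A S = ⋂ i, {w | L w (S i) = 0} := by ext w; simp [hAdef]
    rw [this]
    exact MeasurableSet.iInter fun i =>
      (hLmeas.of_uncurry_right) (measurableSet_singleton 0)
  -- Step A: mean of ω
  have hωmean : ∫ S, ω S ∂Pn = D := by
    have h := mean_omega μ P L hLmeas E hEm hP0w hE1' n Set.univ MeasurableSet.univ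
    rw [Measure.restrict_univ] at h
    have hseteq : ∀ S : Fin n → Z, {w | ∀ i, L w (S i) = 0}
        = {w | w ∈ Set.univ ∧ ∀ i, L w (S i) = 0} := by
      intro S; ext w; simp
    rw [show (fun S => ω S) = fun S : Fin n → Z =>
        (μ {w | w ∈ Set.univ ∧ ∀ i, L w (S i) = 0}).toReal from by
      funext S; rw [hωdef, hseteq S]]
    exact h
  -- Step B: mean of ωε
  have hωεmean : ∀ ε, ∫ S, ωε ε S ∂Pn
      = ∫ w in {w | Emin + ε ≤ E w}, (1 - E w) ^ n ∂μ := by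
    intro ε
    have hC : MeasurableSet {w | Emin + ε ≤ E w} := measurableSet_le measurable_const hEm
    have h := mean_omega μ P L hLmeas E hEm hP0w hE1' n {w | Emin + ε ≤ E w} hC
    rw [show (fun S => ωε ε S) = fun S : Fin n → Z =>
        (μ {w | w ∈ {w | Emin + ε ≤ E w} ∧ ∀ i, L w (S i) = 0}).toReal from by
      funext S; rw [hωεdef]; rfl]
    exact h
  -- ωε ≤ ω
  have hωεle : ∀ ε S, ωε ε S ≤ ω S := by
    intro ε S
    rw [hωεdef, hωdef]
    exact ENNReal.toReal_mono (measure_ne_top μ _)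
      (measure_mono fun w hw => hw.2)
  have hωεnn : ∀ ε S, 0 ≤ ωε ε S := fun ε S => by rw [hωεdef]; exact ENNReal.toReal_nonneg
  have hφbd : ∀ ε S, 0 ≤ φε ε S ∧ φε ε S ≤ 1 := by
    intro ε S
    rw [hφεdef]
    have hωnn : 0 ≤ ω S := by rw [hωdef]; exact ENNReal.toReal_nonneg
    exact ⟨div_nonneg (hωεnn ε S) hωnn, div_le_one_of_le₀ (hωεle ε S) hωnn⟩
  -- Step C: a.e. formula for ES
  have hES_ae : ∀ᵐ S ∂Pn, ES S = Emin + ∫ ε in I, φε ε S := by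
    filter_upwards [hωpos] with S hS
    have hlc := layer_cake_set μ E hEm Emin hEmin hE1' (A S) (hA S)
    have hμA : (μ (A S)).toReal = ω S := (hωdef S).symm
    have hsets : ∀ ε, (μ ({w | Emin + ε ≤ E w} ∩ A S)).toReal = ωε ε S := by
      intro ε
      rw [hωεdef]
      congr 1
    rw [hμA] at hlc
    have hlc2 : ∫ w in A S, E w ∂μ = Emin * ω S + ∫ ε in I, ωε ε S := by
      rw [hlc]
      congr 1
      exact integral_congr_ae (ae_of_all _ fun ε => hsets ε)
    have hphi : ∫ ε in I, φε ε S = (∫ ε in I, ωε ε S) / ω S := by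
      rw [show (fun ε => φε ε S) = fun ε => ωε ε S / ω S from by
        funext ε; exact hφεdef ε S]
      exact integral_div _ _
    rw [hESdef, show {w | ∀ i, L w (S i) = 0} = A S from rfl, hlc2, hphi]
    field_simp
  -- joint measurability of φε
  set T : Set ((Fin n → Z) × W) := {q | ∀ i, L q.2 (q.1 i) = 0} with hTdef
  have hT : MeasurableSet T := by
    have : T = ⋂ i, {q : (Fin n → Z) × W | L q.2 (q.1 i) = 0} := by
      ext q; simp [hTdef]
    rw [this]
    exact MeasurableSet.iInter fun i =>
      (hLmeas.comp (measurable_snd.prodMk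
        ((measurable_pi_apply i).comp measurable_fst))) (measurableSet_singleton 0)
  set U : Set (((Fin n → Z) × ℝ) × W) :=
    {q | Emin + q.1.2 ≤ E q.2 ∧ ∀ i, L q.2 (q.1.1 i) = 0} with hUdef
  have hU : MeasurableSet U := by
    have h1 : MeasurableSet {q : ((Fin n → Z) × ℝ) × W | Emin + q.1.2 ≤ E q.2} :=
      measurableSet_le (measurable_const.add (measurable_snd.comp measurable_fst))
        (hEm.comp measurable_snd)
    have h2 : ∀ i : Fin n, MeasurableSet
        {q : ((Fin n → Z) × ℝ) × W | L q.2 (q.1.1 i) = 0} := fun i =>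
      (hLmeas.comp (measurable_snd.prodMk
        ((measurable_pi_apply i).comp (measurable_fst.comp measurable_fst))))
        (measurableSet_singleton 0)
    have : U = {q : ((Fin n → Z) × ℝ) × W | Emin + q.1.2 ≤ E q.2}
        ∩ ⋂ i, {q | L q.2 (q.1.1 i) = 0} := by
      ext q; simp [hUdef]
    rw [this]
    exact h1.inter (MeasurableSet.iInter h2)
  have hGmeas : Measurable fun p : (Fin n → Z) × ℝ => φε p.2 p.1 := by
    have h1 : Measurable fun p : (Fin n → Z) × ℝ => (μ (Prod.mk p ⁻¹' U)).toReal :=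
      (measurable_measure_prodMk_left hU).ennreal_toReal
    have h2 : Measurable fun S : Fin n → Z => (μ (Prod.mk S ⁻¹' T)).toReal :=
      (measurable_measure_prodMk_left hT).ennreal_toReal
    have : (fun p : (Fin n → Z) × ℝ => φε p.2 p.1)
        = fun p => (μ (Prod.mk p ⁻¹' U)).toReal / (μ (Prod.mk p.1 ⁻¹' T)).toReal := by
      funext p
      rw [hφεdef, hωεdef, hωdef]
      rfl
    rw [this]
    exact h1.div (h2.comp measurable_fst)
  haveI : IsFiniteMeasure ((volume : Measure ℝ).restrict I) := by
    constructor
    rw [Measure.restrict_apply_univ]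
    exact measure_Ioc_lt_top
  have hGint : Integrable (fun p : (Fin n → Z) × ℝ => φε p.2 p.1)
      (Pn.prod ((volume : Measure ℝ).restrict I)) := by
    refine Integrable.mono' (integrable_const 1) hGmeas.aestronglyMeasurable
      (ae_of_all _ ?_)
    rintro ⟨S, ε⟩
    show ‖φε ε S‖ ≤ 1
    rw [Real.norm_eq_abs, abs_of_nonneg (hφbd ε S).1]
    exact (hφbd ε S).2
  have hswap : ∫ S, (∫ ε in I, φε ε S) ∂Pn = ∫ ε in I, (∫ S, φε ε S ∂Pn) := by
    exact integral_integral_swap hGint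
  have hGint1 : Integrable (fun S => ∫ ε in I, φε ε S) Pn :=
    hGint.integral_prod_left
  -- assemble
  have hIw : Integrable (fun w => E w * (1 - E w) ^ n) μ := by
    refine Integrable.mono' (integrable_const 1)
      ((hEm.mul ((measurable_const.sub hEm).pow_const n)).aestronglyMeasurable)
      (ae_of_all _ fun w => ?_)
    show ‖E w * (1 - E w) ^ n‖ ≤ 1
    rw [Real.norm_eq_abs, abs_mul, abs_pow]
    have h1 : |E w| ≤ 1 := by rw [abs_le]; exact ⟨by linarith [hE0' w], hE1' w⟩
    have h2 : |1 - E w| ≤ 1 := by rw [abs_le]; constructor <;> [linarith [hE1' w]; linarith [hE0' w]]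
    calc |E w| * |1 - E w| ^ n ≤ 1 * 1 ^ n :=
          mul_le_mul h1 (pow_le_pow_left₀ (abs_nonneg _) h2 n) (by positivity) zero_le_one
      _ = 1 := by norm_num
  have hIpow : Integrable (fun w => (1 - E w) ^ n) μ := by
    refine Integrable.mono' (integrable_const 1)
      (((measurable_const.sub hEm).pow_const n).aestronglyMeasurable)
      (ae_of_all _ fun w => ?_)
    show ‖(1 - E w) ^ n‖ ≤ 1
    rw [Real.norm_eq_abs, abs_pow]
    have h2 : |1 - E w| ≤ 1 := by rw [abs_le]; constructor <;> [linarith [hE1' w]; linarith [hE0' w]]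
    calc |1 - E w| ^ n ≤ 1 ^ n := pow_le_pow_left₀ (abs_nonneg _) h2 n
      _ = 1 := one_pow n
  have hsub : ∫ w, (E w - Emin) * (1 - E w) ^ n ∂μ
      = (∫ w, E w * (1 - E w) ^ n ∂μ) - Emin * D := by
    have : ∀ w, (E w - Emin) * (1 - E w) ^ n
        = E w * (1 - E w) ^ n - Emin * (1 - E w) ^ n := fun w => by ring
    rw [integral_congr_ae (ae_of_all _ this),
      integral_sub hIw (hIpow.const_mul Emin), integral_const_mul, hDdef]
  have hmain : ∫ S, ES S ∂Pn = Emin + (∫ w, (E w - Emin) * (1 - E w) ^ n ∂μ) / D := by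
    rw [integral_congr_ae hES_ae, integral_add (integrable_const Emin) hGint1]
    congr 1
    · simp
    rw [hswap]
    have hstep : ∫ ε in I, (∫ S, φε ε S ∂Pn)
        = ∫ ε in I, (∫ S, ωε ε S ∂Pn) / D := by
      refine setIntegral_congr_fun measurableSet_Ioc fun ε hε => ?_
      rw [heq ε (le_of_lt hε.1) hε.2, hωmean]
    rw [hstep, integral_div]
    congr 1
    rw [show (fun ε => ∫ S, ωε ε S ∂Pn) = fun ε =>
        ∫ w in {w | Emin + ε ≤ E w}, (1 - E w) ^ n ∂μ from funext hωεmean]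
    exact layer_cake_weighted μ E hEm Emin hEmin hE0' hE1' n
  rw [hmain, hsub]
  field_simp
  ring
end

section
/- (Convex conditional mean implies Corollary 2, Section 3.2) Let X and Z be real-valued integrable random variables on a probability space with X > 0 almost surely, E[X] > 0, X·Z integrable, and suppose there exists a convex function f : [0,∞) → ℝ with f(0) ≤ 0 such that the conditional expectation of X·Z given the σ-algebra generated by X equals f ∘ X almost surely. Then E[Z] ≤ E[X·Z]/E[X]. In the classifier setting this says: if the conditional mean volume of bad global minima ω̄_ε(ω) is a convex function of the total volume ω of global minima vanishing at 0, then ⟨φ_ε(S)⟩_S ≤ ⟨ω_ε(S)⟩_S/⟨ω(S)⟩_S. -/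
/-!
Writing `g x = f x / x`, the hypothesis gives `E[Z | X] = g(X)`, and `g` is non-decreasing on
`(0, ∞)` because the secant slopes of the convex `f` through `0` are, while `f 0 / x` is too since
`f 0 ≤ 0`. So `g(X)` and `X` vary together, and the integral form of Chebyshev's sum inequality
gives `E[Z] E[X] = E[g(X)] E[X] ≤ E[g(X) X] = E[X Z]`.
-/

open MeasureTheory Set

theorem ConvexOn.monotoneOn_div_self {f : ℝ → ℝ} (hf : ConvexOn ℝ (Ici 0) f) (hf0 : f 0 ≤ 0) :
    MonotoneOn (fun x => f x / x) (Ioi 0) := by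
  intro x (hx : 0 < x) y (hy : 0 < y) hxy
  have hsecant : (f x - f 0) / x ≤ (f y - f 0) / y := by
    simpa using hf.secant_mono self_mem_Ici hx.le hy.le hx.ne' hy.ne' hxy
  have hconst : f 0 / x ≤ f 0 / y := by
    rw [div_le_div_iff₀ hx hy]
    exact mul_le_mul_of_nonpos_left hxy hf0
  calc f x / x = (f x - f 0) / x + f 0 / x := by ring
    _ ≤ (f y - f 0) / y + f 0 / y := add_le_add hsecant hconst
    _ = f y / y := by ring

section Chebyshev

variable {Ω : Type*} [MeasurableSpace Ω] {μ : Measure Ω} [IsProbabilityMeasure μ] {U V : Ω → ℝ}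

/-- The integral of `(U a - U b) * (V a - V b)` over `μ ⊗ μ` is `2 (E[U V] - E[U] E[V])`. -/
theorem integral_mul_integral_le_integral_mul_of_ae_prod (hU : Integrable U μ)
    (hV : Integrable V μ) (hUV : Integrable (U * V) μ)
    (hprod : ∀ᵐ p ∂μ.prod μ, 0 ≤ (U p.1 - U p.2) * (V p.1 - V p.2)) :
    (∫ a, U a ∂μ) * ∫ a, V a ∂μ ≤ ∫ a, U a * V a ∂μ := by
  have hexpand : (fun p : Ω × Ω => (U p.1 - U p.2) * (V p.1 - V p.2)) =
      fun p => ((U * V) p.1 + (U * V) p.2) - (U p.1 * V p.2 + V p.1 * U p.2) := by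
    funext p; simp only [Pi.mul_apply]; ring
  have hdiag : Integrable (fun p : Ω × Ω => (U * V) p.1 + (U * V) p.2) (μ.prod μ) :=
    (hUV.comp_fst μ).add (hUV.comp_snd μ)
  have hcross : Integrable (fun p : Ω × Ω => U p.1 * V p.2 + V p.1 * U p.2) (μ.prod μ) :=
    (hU.mul_prod hV).add (hV.mul_prod hU)
  have hnonneg := integral_nonneg_of_ae hprod
  rw [hexpand, integral_sub hdiag hcross, integral_add (hUV.comp_fst μ) (hUV.comp_snd μ),
    integral_add (hU.mul_prod hV) (hV.mul_prod hU), integral_fun_fst, integral_fun_snd,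
    integral_prod_mul, integral_prod_mul] at hnonneg
  simp only [probReal_univ, one_smul, Pi.mul_apply] at hnonneg
  linarith

theorem MonovaryOn.integral_mul_integral_le {t : Set Ω} (h : MonovaryOn U V t)
    (ht : ∀ᵐ a ∂μ, a ∈ t) (hU : Integrable U μ) (hV : Integrable V μ)
    (hUV : Integrable (U * V) μ) :
    (∫ a, U a ∂μ) * ∫ a, V a ∂μ ≤ ∫ a, U a * V a ∂μ := by
  refine integral_mul_integral_le_integral_mul_of_ae_prod hU hV hUV ?_
  filter_upwards [Measure.quasiMeasurePreserving_fst.ae ht,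
    Measure.quasiMeasurePreserving_snd.ae ht] with p hp₁ hp₂
  exact h.sub_mul_sub_nonneg hp₂ hp₁

end Chebyshev

theorem condExp_eq_inv_mul_condExp_mul {Ω : Type*} {m m₀ : MeasurableSpace Ω} {μ : Measure Ω}
    {X Z : Ω → ℝ} (hXm : StronglyMeasurable[m] X) (hX : ∀ᵐ a ∂μ, X a ≠ 0)
    (hZ : Integrable Z μ) (hXZ : Integrable (X * Z) μ) :
    μ[Z | m] =ᵐ[μ] X⁻¹ * μ[X * Z | m] := by
  have hZ_eq : Z =ᵐ[μ] X⁻¹ * (X * Z) := by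
    filter_upwards [hX] with a ha
    simp [inv_mul_cancel_left₀ ha]
  calc μ[Z | m] =ᵐ[μ] μ[X⁻¹ * (X * Z) | m] := condExp_congr_ae hZ_eq
    _ =ᵐ[μ] X⁻¹ * μ[X * Z | m] :=
      condExp_mul_of_stronglyMeasurable_left hXm.measurable.inv.stronglyMeasurable (hZ.congr hZ_eq) hXZ

/-- Convex conditional mean implies Corollary 2 (Section 3.2): if
`E[X·Z | σ(X)] = f ∘ X` a.s. for a convex `f : [0,∞) → ℝ` with `f(0) ≤ 0`,
`X > 0` a.s. and `E[X] > 0`, then `E[Z] ≤ E[X·Z]/E[X]`. -/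
theorem convex_condexp_implies_corollary2
    {α : Type*} [MeasurableSpace α] (μ : Measure α) [IsProbabilityMeasure μ]
    (X Z : α → ℝ) (hX : Measurable X)
    (hXint : Integrable X μ) (hZint : Integrable Z μ)
    (hXZint : Integrable (fun a => X a * Z a) μ)
    (hXpos : ∀ᵐ a ∂μ, 0 < X a) (hEX : 0 < ∫ a, X a ∂μ)
    (f : ℝ → ℝ) (hfconv : ConvexOn ℝ (Set.Ici 0) f) (hf0 : f 0 ≤ 0)
    (hcond : μ[fun a => X a * Z a | MeasurableSpace.comap X inferInstance]
      =ᵐ[μ] f ∘ X) :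
    ∫ a, Z a ∂μ ≤ (∫ a, X a * Z a ∂μ) / (∫ a, X a ∂μ) := by
  set g : ℝ → ℝ := fun x => f x / x
  have hXm : StronglyMeasurable[MeasurableSpace.comap X inferInstance] X :=
    (comap_measurable X).stronglyMeasurable
  have hZ_cond : μ[Z | MeasurableSpace.comap X inferInstance] =ᵐ[μ] g ∘ X := by
    filter_upwards [condExp_eq_inv_mul_condExp_mul hXm (hXpos.mono fun _ h => h.ne') hZint hXZint,
      hcond] with a ha hfa
    simp only [ha, Pi.mul_apply, Pi.inv_apply, Function.comp_apply, g, div_eq_inv_mul]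
    exact congrArg _ hfa
  have hgX_mul : (fun a => g (X a) * X a) =ᵐ[μ] f ∘ X := by
    filter_upwards [hXpos] with a ha
    simp only [g, Function.comp_apply, div_mul_cancel₀ _ ha.ne']
  have hEZ : ∫ a, Z a ∂μ = ∫ a, g (X a) ∂μ := by
    rw [← integral_condExp hX.comap_le, integral_congr_ae hZ_cond, Function.comp_def]
  have hEXZ : ∫ a, X a * Z a ∂μ = ∫ a, g (X a) * X a ∂μ := by
    rw [← integral_condExp hX.comap_le, integral_congr_ae hcond, integral_congr_ae hgX_mul]
  have hmonovary : MonovaryOn (g ∘ X) X {a | 0 < X a} := fun i hi j hj hij =>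
    hfconv.monotoneOn_div_self hf0 hi hj hij.le
  rw [le_div_iff₀ hEX, hEZ, hEXZ]
  exact hmonovary.integral_mul_integral_le hXpos (integrable_condExp.congr hZ_cond) hXint
    (integrable_condExp.congr (hcond.trans hgX_mul.symm))
end
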